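/- arXiv:1812.03324 — 2 statements merged into one kernel-verified Lean document; each statement's English description precedes it below -/
import Mathlib

section
/- Let n > m ≥ 2 and k ≥ 1 be integers, let X_1,…,X_k be i.i.d. random variables with X_1 ∼ P_X strictly positive on a set X with |X| = n and P_X(1) ≥ … ≥ P_X(n), and let X̃_m be as follows: if P_X(1) < 1/m, X̃_m is uniform on {1,…,m}; otherwise P_{X̃_m}(i) = P_X(i) for i ≤ n* and P_{X̃_m}(i) = (1/(m−n*))·Σ_{j=n*+1}^{n} P_X(j) for n* < i ≤ m, where n* is the maximal integer i ∈ {1,…,m−1} with P_X(i) ≥ (1/(m−i))·Σ_{j=i+1}^{n} P_X(j). Define v(α) := log((α−1)/(2^α−2)) − (α/(α−1))·log(α/(2^α−1)) for α ∈ (0,1)∪(1,∞), with v(1) := log(2/(e·log 2)). Then there exists a deterministic function f* ∈ F_{n,m} such that, setting Y_i = f*(X_i) for all i, and letting g_{X^k}, g_{Y^k} be ranking functions of X^k and Y^k, for every ρ > 0: (1/k)·log( E[g_{X^k}(X^k)^ρ] / E[g_{Y^k}(Y^k)^ρ] ) ≤ ρ·[H_{1/(1+ρ)}(X) − H_{1/(1+ρ)}(X̃_m)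 + v(1/(1+ρ))] + (ρ/k)·log(1 + k·log m). -/
/-!
Write `α = 1 / (1 + ρ)`. Arikan's bounds give `log E[g_X(X^k)^ρ] ≤ k ρ H_α(X)`, because a
sequence `x` is ranked after at most `∑_y (P(y) / P(x))^α` others, and
`log E[g_Y(Y^k)^ρ] ≥ k ρ H_α(Y) - ρ log (1 + k log m)`, by Hölder's inequality against the
harmonic sum `∑_y 1 / g(y) ≤ 1 + log m^k`. So it suffices to find `f` with
`H_α(X̃_m) ≤ H_α(f(X)) + v(α)`.

Let `f` fix the `h` symbols that `X̃_m` keeps (`h = n*`, or `h = 0` in the uniform case) and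
distribute the others over the remaining `m - h` symbols so as to minimise the sum of the squared
bin masses. The choice of `h` makes every tail mass lighter than the average bin, so the heaviest
bin holds two items and, by minimality, no bin is more than twice as heavy as another. For masses
within a factor two of each other, the chord of `t ↦ t^α` on `[1, 2]` and weighted AM-GM give
`∑ q_j^α ≥ e^{-(1-α) v(α)} (∑ q_j)^α N^{1-α}`, whose right side is the tail contribution of
`X̃_m`.
-/

open Finset

/-- `P` is a probability mass function, strictly positive on `{1,…,n}`. -/
def IsPMF (n : ℕ) (P : ℕ → ℝ) : Prop :=
  (∀ i ∈ Finset.Icc 1 n, 0 < P i) ∧ ∑ i ∈ Finset.Icc 1 n, P i = 1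

/-- The ratio of the maximal to minimal mass of `P` on `{1,…,n}` is at most `ρ`. -/
def RatioBdd (n : ℕ) (ρ : ℝ) (P : ℕ → ℝ) : Prop :=
  ∀ i ∈ Finset.Icc 1 n, ∀ j ∈ Finset.Icc 1 n, P i ≤ ρ * P j

/-- `P` is nonincreasing on `{1,…,n}`. -/
def DecOn (n : ℕ) (P : ℕ → ℝ) : Prop :=
  ∀ i ∈ Finset.Icc 1 n, ∀ j ∈ Finset.Icc 1 n, i ≤ j → P j ≤ P i

/-- Sum of the `k` largest masses of `P` on `{1,…,n}`. -/
noncomputable def topSum (n : ℕ) (P : ℕ → ℝ) (k : ℕ) : ℝ :=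
  sSup ((fun s : Finset ℕ => ∑ i ∈ s, P i) '' {s | s ⊆ Finset.Icc 1 n ∧ s.card = k})

/-- `P ≺ Q`: `P` is majorized by `Q`, both viewed on `{1,…,n}`. -/
def MajorizedBy (n : ℕ) (P Q : ℕ → ℝ) : Prop :=
  ∀ k, 1 ≤ k → k ≤ n - 1 → topSum n P k ≤ topSum n Q k

/-- Zero-padding of a pmf on `{1,…,m}` outside of `{1,…,m}`. -/
def padTo (m : ℕ) (Q : ℕ → ℝ) : ℕ → ℝ := fun i => if i ≤ m then Q i else 0

/-- Rényi entropy of order `α` of `P` on `{1,…,n}` (Shannon entropy for `α = 1`);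
natural logarithms. -/
noncomputable def renyiH (n : ℕ) (α : ℝ) (P : ℕ → ℝ) : ℝ :=
  if α = 1 then -∑ i ∈ Finset.Icc 1 n, P i * Real.log (P i)
  else (1 - α)⁻¹ * Real.log (∑ i ∈ Finset.Icc 1 n, P i ^ α)

/-- `c_α^{(n)}(ρ) = log n − min_{P ∈ 𝒫_n(ρ)} H_α(P)` for `n ≥ 2`, and `0` for `n ≤ 1`. -/
noncomputable def cN (α ρ : ℝ) (n : ℕ) : ℝ :=
  if n ≤ 1 then 0
  else Real.log n - sInf (renyiH n α '' {P | IsPMF n P ∧ RatioBdd n ρ P})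

/-- The closed-form expression for `c_α^{(∞)}(ρ)`, `α ∈ (0,1) ∪ (1,∞)`. -/
noncomputable def cInfinity (α ρ : ℝ) : ℝ :=
  (α - 1)⁻¹ * Real.log (1 + (1 + α * (ρ - 1) - ρ ^ α) / ((1 - α) * (ρ - 1)))
    - α / (α - 1) * Real.log (1 + (1 + α * (ρ - 1) - ρ ^ α) / ((1 - α) * (ρ ^ α - 1)))

/-- `v(α) := c_α^{(∞)}(2)`, with the continuous extension at `α = 1`. -/
noncomputable def vFun (α : ℝ) : ℝ :=
  if α = 1 then Real.log (2 / (Real.exp 1 * Real.log 2))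
  else Real.log ((α - 1) / ((2 : ℝ) ^ α - 2)) - α / (α - 1) * Real.log (α / ((2 : ℝ) ^ α - 1))

/-- `n*`: the maximal `i ∈ {1,…,m−1}` with `P i ≥ (m−i)⁻¹ ∑_{j=i+1}^n P j`. -/
noncomputable def nStar (n m : ℕ) (P : ℕ → ℝ) : ℕ :=
  sSup {i : ℕ | 1 ≤ i ∧ i ≤ m - 1 ∧
    ((m : ℝ) - (i : ℝ))⁻¹ * ∑ j ∈ Finset.Icc (i + 1) n, P j ≤ P i}

/-- The pmf of `X̃_m` on `{1,…,m}`, built from a nonincreasing pmf `P` on `{1,…,n}`. -/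
noncomputable def tildeX (n m : ℕ) (P : ℕ → ℝ) : ℕ → ℝ := fun i =>
  if P 1 < 1 / (m : ℝ) then 1 / (m : ℝ)
  else if i ≤ nStar n m P then P i
  else ((m : ℝ) - (nStar n m P : ℝ))⁻¹ * ∑ j ∈ Finset.Icc (nStar n m P + 1) n, P j

/-- The pmf of `Ỹ_m` on `{1,…,m}`. -/
def tildeY (n m : ℕ) (P : ℕ → ℝ) : ℕ → ℝ := fun i =>
  if i = 1 then ∑ j ∈ Finset.Icc 1 (n - m + 1), P j else P (n - m + i)

/-- The pmf of `f(X)`: `(push n f P) j = ∑_{i ∈ {1,…,n}, f i = j} P i`. -/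
def push (n : ℕ) (f : ℕ → ℕ) (P : ℕ → ℝ) : ℕ → ℝ := fun j =>
  ∑ i ∈ (Finset.Icc 1 n).filter (fun i => f i = j), P i

/-- The set `{1,…,n}^k` of source sequences of length `k`. -/
def seqSet (n k : ℕ) : Finset (Fin k → ℕ) := Fintype.piFinset fun _ => Finset.Icc 1 n

/-- Product (i.i.d.) probability of a sequence. -/
def prodP (k : ℕ) (P : ℕ → ℝ) (x : Fin k → ℕ) : ℝ := ∏ i, P (x i)

/-- `g` is a ranking function for the i.i.d. vector on `{1,…,n}^k` with marginal `P`: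
a bijection onto `{1,…,n^k}` which assigns smaller ranks to larger masses. -/
def IsRanking (n k : ℕ) (P : ℕ → ℝ) (g : (Fin k → ℕ) → ℕ) : Prop :=
  Set.BijOn g (↑(seqSet n k)) (Set.Icc 1 (n ^ k)) ∧
    ∀ x ∈ seqSet n k, ∀ y ∈ seqSet n k, prodP k P y < prodP k P x → g x < g y

/-- The `ρ`-th guessing moment `E[g(Z^k)^ρ]`. -/
noncomputable def gmoment (n k : ℕ) (P : ℕ → ℝ) (g : (Fin k → ℕ) → ℕ) (ρ : ℝ) : ℝ :=
  ∑ x ∈ seqSet n k, prodP k P x * (g x : ℝ) ^ ρ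

/-- Kraft inequality for a `D`-ary length function on `{1,…,n}^k`. -/
def Kraft (n k D : ℕ) (ℓ : (Fin k → ℕ) → ℕ) : Prop :=
  ∑ x ∈ seqSet n k, (D : ℝ) ^ (-(ℓ x : ℝ)) ≤ 1

/-- Scaled cumulant generating function `Λ_k(ρ)` of the codeword lengths (base-`D` log). -/
noncomputable def cgf (n k D : ℕ) (P : ℕ → ℝ) (ℓ : (Fin k → ℕ) → ℕ) (ρ : ℝ) : ℝ :=
  (1 / (k : ℝ)) * Real.logb D (∑ x ∈ seqSet n k, prodP k P x * (D : ℝ) ^ (ρ * (ℓ x : ℝ)))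

/-- `i_β` of Lemma 2. -/
noncomputable def iBeta (n : ℕ) (ρ β : ℝ) : ℕ := Nat.floor ((1 - (n : ℝ) * β) / ((ρ - 1) * β))

/-- The pmf `Q_β` of Lemma 2. -/
noncomputable def Qbeta (n : ℕ) (ρ β : ℝ) : ℕ → ℝ := fun j =>
  if j ≤ iBeta n ρ β then ρ * β
  else if j = iBeta n ρ β + 1 then
    1 - ((n : ℝ) + (iBeta n ρ β : ℝ) * ρ - (iBeta n ρ β : ℝ) - 1) * β
  else β

namespace Guessing

open Real

noncomputable def ratioTwoConst (α : ℝ) : ℝ :=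
  (((2 : ℝ) ^ α - 1) / α) ^ α * ((2 - (2 : ℝ) ^ α) / (1 - α)) ^ (1 - α)

section RatioTwo

variable {α : ℝ}

lemma two_rpow_mem_Ioo (h0 : 0 < α) (h1 : α < 1) : (2 : ℝ) ^ α ∈ Set.Ioo 1 2 :=
  ⟨one_lt_rpow one_lt_two h0, rpow_lt_self_of_one_lt one_lt_two h1⟩

lemma ratioTwoConst_pos (h0 : 0 < α) (h1 : α < 1) : 0 < ratioTwoConst α := by
  obtain ⟨h2, h3⟩ := two_rpow_mem_Ioo h0 h1
  have : 0 < 1 - α := by linarith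
  unfold ratioTwoConst
  positivity

lemma ratioTwoConst_le_one (h0 : 0 < α) (h1 : α < 1) : ratioTwoConst α ≤ 1 := by
  obtain ⟨h2, h3⟩ := two_rpow_mem_Ioo h0 h1
  have h1' : 0 < 1 - α := by linarith
  calc ratioTwoConst α
      ≤ α * (((2 : ℝ) ^ α - 1) / α) + (1 - α) * ((2 - (2 : ℝ) ^ α) / (1 - α)) :=
        geom_mean_le_arith_mean2_weighted h0.le h1'.le (by positivity) (by positivity) (by ring)
    _ = 1 := by field_simp; ring

lemma log_ratioTwoConst (h0 : 0 < α) (h1 : α < 1) :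
    log (ratioTwoConst α) = -((1 - α) * vFun α) := by
  obtain ⟨h2, h3⟩ := two_rpow_mem_Ioo h0 h1
  have h1' : 0 < 1 - α := by linarith
  have hα1 : α - 1 ≠ 0 := by linarith
  rw [vFun, if_neg (by linarith), ratioTwoConst, log_mul (by positivity) (by positivity),
    log_rpow (by positivity), log_rpow (by positivity),
    show (α - 1) / ((2 : ℝ) ^ α - 2) = ((2 - (2 : ℝ) ^ α) / (1 - α))⁻¹ by
      rw [inv_div, ← neg_div_neg_eq]; ring_nf,
    show α / ((2 : ℝ) ^ α - 1) = (((2 : ℝ) ^ α - 1) / α)⁻¹ by rw [inv_div],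
    log_inv, log_inv]
  field_simp
  ring

lemma chord_le_rpow (h0 : 0 < α) (h1 : α < 1) {x : ℝ} (hx1 : 1 ≤ x) (hx2 : x ≤ 2) :
    ((2 : ℝ) ^ α - 1) * x + (2 - (2 : ℝ) ^ α) ≤ x ^ α := by
  have hc := (concaveOn_rpow h0.le h1.le).2 (Set.mem_Ici.mpr zero_le_one)
    (Set.mem_Ici.mpr zero_le_two) (by linarith : (0 : ℝ) ≤ 2 - x)
    (by linarith : (0 : ℝ) ≤ x - 1) (by ring)
  simp only [smul_eq_mul, one_rpow] at hc
  calc ((2 : ℝ) ^ α - 1) * x + (2 - (2 : ℝ) ^ α) = (2 - x) * 1 + (x - 1) * (2 : ℝ) ^ α := by ring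
    _ ≤ ((2 - x) * 1 + (x - 1) * 2) ^ α := hc
    _ = x ^ α := by ring_nf

/-- The left side is the minimum over `t > 0` of the right side. -/
lemma div_rpow_mul_div_rpow_le {A B t : ℝ} (h0 : 0 < α) (h1 : α < 1) (hA : 0 ≤ A) (hB : 0 ≤ B)
    (ht : 0 < t) :
    (A / α) ^ α * (B / (1 - α)) ^ (1 - α) ≤ A * t ^ (α - 1) + B * t ^ α := by
  have h1' : 0 < 1 - α := by linarith
  have ht' : (t ^ (α - 1)) ^ α * (t ^ α) ^ (1 - α) = 1 := by
    rw [← rpow_mul ht.le, ← rpow_mul ht.le, ← rpow_add ht, ← rpow_zero t]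
    ring_nf
  calc (A / α) ^ α * (B / (1 - α)) ^ (1 - α)
      = (A * t ^ (α - 1) / α) ^ α * (B * t ^ α / (1 - α)) ^ (1 - α) := by
        rw [mul_div_right_comm, mul_div_right_comm B, mul_rpow (by positivity) (by positivity),
          mul_rpow (by positivity) (by positivity)]
        linear_combination (-(A / α) ^ α * (B / (1 - α)) ^ (1 - α)) * ht'
    _ ≤ α * (A * t ^ (α - 1) / α) + (1 - α) * (B * t ^ α / (1 - α)) :=
        geom_mean_le_arith_mean2_weighted h0.le h1'.le (by positivity) (by positivity) (by ring)
    _ = A * t ^ (α - 1) + B * t ^ α := by field_simp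

lemma ratioTwoConst_mul_le_sum_rpow {ι : Type*} (h0 : 0 < α) (h1 : α < 1) {s : Finset ι}
    (hs : s.Nonempty) {q : ι → ℝ} (hq : ∀ i ∈ s, 0 < q i)
    (hq2 : ∀ i ∈ s, ∀ j ∈ s, q i ≤ 2 * q j) :
    ratioTwoConst α * (∑ i ∈ s, q i) ^ α * (#s : ℝ) ^ (1 - α) ≤ ∑ i ∈ s, q i ^ α := by
  obtain ⟨h2, h3⟩ := two_rpow_mem_Ioo h0 h1
  have h1' : 0 < 1 - α := by linarith
  obtain ⟨i₀, hi₀, hmin⟩ := s.exists_min_image q hs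
  set t := q i₀
  have ht : 0 < t := hq i₀ hi₀
  have hchord : ∀ i ∈ s, ((2 : ℝ) ^ α - 1) * q i * t ^ (α - 1) + (2 - (2 : ℝ) ^ α) * t ^ α
      ≤ q i ^ α := by
    intro i hi
    have hx := chord_le_rpow h0 h1 ((one_le_div ht).2 (hmin i hi))
      ((div_le_iff₀ ht).2 (by linarith [hq2 i hi i₀ hi₀]))
    rw [div_rpow (hq i hi).le ht.le, le_div_iff₀ (by positivity)] at hx
    calc _ = (((2 : ℝ) ^ α - 1) * (q i / t) + (2 - (2 : ℝ) ^ α)) * t ^ α := by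
          rw [rpow_sub_one ht.ne']; field_simp
      _ ≤ q i ^ α := hx
  calc ratioTwoConst α * (∑ i ∈ s, q i) ^ α * (#s : ℝ) ^ (1 - α)
      = (((2 : ℝ) ^ α - 1) * (∑ i ∈ s, q i) / α) ^ α
          * ((2 - (2 : ℝ) ^ α) * #s / (1 - α)) ^ (1 - α) := by
        rw [ratioTwoConst, mul_div_right_comm, mul_div_right_comm _ (#s : ℝ),
          mul_rpow (by positivity) (sum_pos hq hs).le, mul_rpow (by positivity) (by positivity)]
        ring
    _ ≤ ((2 : ℝ) ^ α - 1) * (∑ i ∈ s, q i) * t ^ (α - 1) + (2 - (2 : ℝ) ^ α) * #s * t ^ α :=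
        div_rpow_mul_div_rpow_le h0 h1 (by have := sum_pos hq hs; positivity) (by positivity) ht
    _ = ∑ i ∈ s, (((2 : ℝ) ^ α - 1) * q i * t ^ (α - 1) + (2 - (2 : ℝ) ^ α) * t ^ α) := by
        rw [sum_add_distrib, sum_const, nsmul_eq_mul, ← sum_mul, ← mul_sum]
        ring
    _ ≤ ∑ i ∈ s, q i ^ α := sum_le_sum hchord

end RatioTwo

section BinPacking

variable {ι β : Type*} [Fintype ι] [DecidableEq β]

def load (w : ι → ℝ) (f : ι → β) (b : β) : ℝ := ∑ i with f i = b, w i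

lemma sum_load [Fintype β] (w : ι → ℝ) (f : ι → β) : ∑ b, load w f b = ∑ i, w i :=
  sum_fiberwise univ f w

lemma load_update [DecidableEq ι] (w : ι → ℝ) (f : ι → β) (i : ι) (b c : β) :
    load w (Function.update f i b) c
      = load w f c + ((if b = c then w i else 0) - (if f i = c then w i else 0)) := by
  simp only [load, sum_filter]
  rw [← add_sum_erase _ _ (mem_univ i), ← add_sum_erase _ _ (mem_univ i),
    sum_congr rfl fun j hj => by rw [Function.update_of_ne (ne_of_mem_erase hj)]]
  simp only [Function.update_self]
  ring

lemma sum_sq_load_update [DecidableEq ι] [Fintype β] (w : ι → ℝ) (f : ι → β) (i : ι) {b : β}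
    (hb : b ≠ f i) :
    ∑ c, load w (Function.update f i b) c ^ 2
      = ∑ c, load w f c ^ 2 + 2 * w i * (w i + load w f b - load w f (f i)) := by
  have hfi : f i ∈ univ.erase b := mem_erase.2 ⟨hb.symm, mem_univ _⟩
  have hrest : ∀ c ∈ (univ.erase b).erase (f i),
      load w (Function.update f i b) c ^ 2 = load w f c ^ 2 := fun c hc => by
    rw [load_update, if_neg (ne_of_mem_erase (mem_of_mem_erase hc)).symm,
      if_neg (ne_of_mem_erase hc).symm]
    ring
  rw [← add_sum_erase _ _ (mem_univ b), ← add_sum_erase _ _ hfi, sum_congr rfl hrest,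
    ← add_sum_erase _ _ (mem_univ b), ← add_sum_erase _ _ hfi,
    load_update, load_update, if_pos rfl, if_neg hb.symm, if_neg hb, if_pos rfl]
  ring

lemma load_sub_le_of_isMin [DecidableEq ι] [Fintype β] {w : ι → ℝ} (hw : ∀ i, 0 < w i)
    {f : ι → β} (hf : ∀ g : ι → β, ∑ c, load w f c ^ 2 ≤ ∑ c, load w g c ^ 2) (i : ι) (b : β) :
    load w f (f i) - w i ≤ load w f b := by
  by_cases hb : b = f i
  · rw [hb]; linarith [hw i]
  have h := hf (Function.update f i b)
  rw [sum_sq_load_update w f i hb] at h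
  nlinarith [hw i]

theorem exists_load_le_two_mul [Fintype β] [Nonempty β] {w : ι → ℝ} (hw : ∀ i, 0 < w i)
    (havg : ∀ i, Fintype.card β * w i < ∑ j, w j) :
    ∃ f : ι → β, ∀ b b', load w f b ≤ 2 * load w f b' := by
  classical
  obtain ⟨f, hf⟩ := Finite.exists_min fun f : ι → β => ∑ c, load w f c ^ 2
  obtain ⟨bmax, -, hmax⟩ := univ.exists_max_image (load w f) univ_nonempty
  refine ⟨f, fun b b' => (hmax b (mem_univ b)).trans ?_⟩
  have hload_nonneg : ∀ c, 0 ≤ load w f c := fun c => sum_nonneg fun i _ => (hw i).le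
  have htotal : ∑ j, w j ≤ Fintype.card β * load w f bmax := by
    rw [← sum_load w f, ← nsmul_eq_mul]
    exact sum_le_card_nsmul _ _ _ fun c _ => hmax c (mem_univ c)
  obtain hempty | ⟨i, hi⟩ := (univ.filter (f · = bmax)).eq_empty_or_nonempty
  · have : load w f bmax = 0 := by rw [load, hempty, sum_empty]
    linarith [hload_nonneg b']
  -- the fullest bin holds at least two items, since a single item is lighter than the average
  obtain ⟨i', hi', hii'⟩ : ∃ i' ∈ univ.filter (f · = bmax), i' ≠ i := by
    by_contra! h
    have : load w f bmax = w i := by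
      rw [load, (eq_singleton_iff_unique_mem.2 ⟨hi, h⟩), sum_singleton]
    rw [this] at htotal
    linarith [havg i]
  have hpair : w i + w i' ≤ load w f bmax := by
    rw [← sum_pair hii'.symm]
    exact sum_le_sum_of_subset_of_nonneg (insert_subset hi (singleton_subset_iff.2 hi'))
      fun j _ _ => (hw j).le
  have h1 := load_sub_le_of_isMin hw hf i b'
  have h2 := load_sub_le_of_isMin hw hf i' b'
  rw [(mem_filter.1 hi).2] at h1
  rw [(mem_filter.1 hi').2] at h2
  linarith

end BinPacking

lemma sum_rpow_mul_rpow_le {ι : Type*} {s : Finset ι} {a b : ι → ℝ} {α : ℝ} (h0 : 0 < α)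
    (h1 : α < 1) (ha : ∀ i ∈ s, 0 ≤ a i) (hb : ∀ i ∈ s, 0 ≤ b i) :
    ∑ i ∈ s, a i ^ α * b i ^ (1 - α) ≤ (∑ i ∈ s, a i) ^ α * (∑ i ∈ s, b i) ^ (1 - α) := by
  have h1' : 0 < 1 - α := by linarith
  have key := inner_le_Lp_mul_Lq_of_nonneg s (Real.HolderConjugate.inv_one_sub_inv h0 h1)
    (f := fun i => a i ^ α) (g := fun i => b i ^ (1 - α))
    (fun i hi => rpow_nonneg (ha i hi) _) (fun i hi => rpow_nonneg (hb i hi) _)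
  simp only [one_div, inv_inv] at key
  convert key using 3 <;> refine sum_congr rfl fun i hi => ?_
  · rw [← rpow_mul (ha i hi), mul_inv_cancel₀ h0.ne', rpow_one]
  · rw [← rpow_mul (hb i hi), mul_inv_cancel₀ h1'.ne', rpow_one]

section Ranking

variable {ι : Type*} {s : Finset ι} {p : ι → ℝ} {g : ι → ℕ} {N : ℕ}

lemma rank_le_card_filter (hg : Set.BijOn g s (Set.Icc 1 N))
    (hrank : ∀ x ∈ s, ∀ y ∈ s, p y < p x → g x < g y) {x : ι} (hx : x ∈ s) :
    g x ≤ #{y ∈ s | p x ≤ p y} := by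
  classical
  calc g x = #(Icc 1 (g x)) := by simp
    _ ≤ #({y ∈ s | p x ≤ p y}.image g) := card_le_card fun b hb => by
        obtain ⟨hb1, hb2⟩ := mem_Icc.1 hb
        obtain ⟨y, hy, rfl⟩ := hg.surjOn ⟨hb1, hb2.trans (hg.mapsTo hx).2⟩
        exact mem_image_of_mem g
          (mem_filter.2 ⟨hy, not_lt.1 fun h => (hrank x hx y hy h).not_ge hb2⟩)
    _ ≤ _ := card_image_le

theorem moment_rank_le (hp : ∀ x ∈ s, 0 < p x) (hg : Set.BijOn g s (Set.Icc 1 N))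
    (hrank : ∀ x ∈ s, ∀ y ∈ s, p y < p x → g x < g y) {ρ : ℝ} (hρ : 0 < ρ) :
    ∑ x ∈ s, p x * (g x : ℝ) ^ ρ ≤ (∑ x ∈ s, p x ^ (1 / (1 + ρ))) ^ (1 + ρ) := by
  set α := 1 / (1 + ρ)
  set S := ∑ y ∈ s, p y ^ α
  have hα : 0 < α := by positivity
  have hαρ : α + α * ρ = 1 := by simp only [α]; field_simp
  have hterm : ∀ x ∈ s, p x * (g x : ℝ) ^ ρ ≤ S ^ ρ * p x ^ α := by
    intro x hx
    have hpx := hp x hx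
    have hgS : (g x : ℝ) * p x ^ α ≤ S :=
      calc (g x : ℝ) * p x ^ α ≤ #{y ∈ s | p x ≤ p y} * p x ^ α := by
            gcongr; exact_mod_cast rank_le_card_filter hg hrank hx
        _ = ∑ y ∈ s with p x ≤ p y, p x ^ α := by rw [sum_const, nsmul_eq_mul]
        _ ≤ ∑ y ∈ s with p x ≤ p y, p y ^ α :=
            sum_le_sum fun y hy => rpow_le_rpow hpx.le (mem_filter.1 hy).2 hα.le
        _ ≤ S := sum_le_sum_of_subset_of_nonneg (filter_subset _ _)
            fun y hy _ => (rpow_pos_of_pos (hp y hy) α).le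
    calc p x * (g x : ℝ) ^ ρ = p x ^ α * ((g x : ℝ) * p x ^ α) ^ ρ := by
          rw [mul_rpow (Nat.cast_nonneg _) (by positivity), ← rpow_mul hpx.le, mul_left_comm,
            ← rpow_add hpx, hαρ, rpow_one, mul_comm]
      _ ≤ p x ^ α * S ^ ρ := by gcongr
      _ = S ^ ρ * p x ^ α := mul_comm _ _
  calc ∑ x ∈ s, p x * (g x : ℝ) ^ ρ ≤ ∑ x ∈ s, S ^ ρ * p x ^ α := sum_le_sum hterm
    _ = S ^ (1 + ρ) := by
        rw [← mul_sum, rpow_add' (sum_nonneg fun y hy => (rpow_pos_of_pos (hp y hy) α).le)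
          (by positivity), rpow_one, mul_comm]

lemma sum_inv_rank_le (hg : Set.BijOn g s (Set.Icc 1 N)) :
    ∑ x ∈ s, (g x : ℝ)⁻¹ ≤ 1 + log N := by
  calc ∑ x ∈ s, (g x : ℝ)⁻¹ = ∑ i ∈ Icc 1 N, (i : ℝ)⁻¹ :=
        sum_nbij g (fun x hx => by simpa using hg.mapsTo hx) hg.injOn
          (by simpa using hg.surjOn) fun _ _ => rfl
    _ = harmonic N := by rw [harmonic_eq_sum_Icc]; push_cast; rfl
    _ ≤ 1 + log N := harmonic_le_one_add_log N

theorem sum_rpow_le_moment_rank (hp : ∀ x ∈ s, 0 ≤ p x) (hg : Set.BijOn g s (Set.Icc 1 N))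
    {ρ : ℝ} (hρ : 0 < ρ) :
    ∑ x ∈ s, p x ^ (1 / (1 + ρ))
      ≤ (∑ x ∈ s, p x * (g x : ℝ) ^ ρ) ^ (1 / (1 + ρ)) * (1 + log N) ^ (1 - 1 / (1 + ρ)) := by
  set α := 1 / (1 + ρ)
  have h0 : 0 < α := by positivity
  have h1 : α < 1 := by simp only [α]; rw [div_lt_one (by positivity)]; linarith
  have hg0 : ∀ x ∈ s, (0 : ℝ) < g x := fun x hx => by
    exact_mod_cast (hg.mapsTo hx).1
  have hexp : ρ * α + -(1 - α) = 0 := by simp only [α]; field_simp; ring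
  have hsplit : ∀ x ∈ s, p x ^ α = (p x * (g x : ℝ) ^ ρ) ^ α * ((g x : ℝ)⁻¹) ^ (1 - α) := by
    intro x hx
    have hgx := hg0 x hx
    rw [mul_rpow (hp x hx) (by positivity), mul_assoc, ← rpow_mul hgx.le, inv_rpow hgx.le,
      ← rpow_neg hgx.le, ← rpow_add hgx, hexp, rpow_zero, mul_one]
  calc ∑ x ∈ s, p x ^ α
      = ∑ x ∈ s, (p x * (g x : ℝ) ^ ρ) ^ α * ((g x : ℝ)⁻¹) ^ (1 - α) := sum_congr rfl hsplit
    _ ≤ (∑ x ∈ s, p x * (g x : ℝ) ^ ρ) ^ α * (∑ x ∈ s, (g x : ℝ)⁻¹) ^ (1 - α) :=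
        sum_rpow_mul_rpow_le h0 h1 (fun x hx => mul_nonneg (hp x hx) (by positivity))
          fun x hx => by positivity
    _ ≤ (∑ x ∈ s, p x * (g x : ℝ) ^ ρ) ^ α * (1 + log N) ^ (1 - α) := by
        gcongr
        · exact rpow_nonneg (sum_nonneg fun x hx => mul_nonneg (hp x hx) (by positivity)) _
        · exact sum_inv_rank_le hg

end Ranking

section IID

variable {n k : ℕ} {P : ℕ → ℝ}

lemma mul_renyiH_eq {ρ : ℝ} (hρ : 0 < ρ) :
    ρ * renyiH n (1 / (1 + ρ)) P = (1 + ρ) * log (∑ i ∈ Icc 1 n, P i ^ (1 / (1 + ρ))) := by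
  rw [renyiH, if_neg (by rw [div_eq_one_iff_eq (by positivity)]; linarith),
    show 1 - 1 / (1 + ρ) = ρ / (1 + ρ) by field_simp; ring, inv_div, ← mul_assoc,
    mul_div_cancel₀ _ hρ.ne']

lemma prodP_pos (hP : ∀ i ∈ Icc 1 n, 0 < P i) {x : Fin k → ℕ} (hx : x ∈ seqSet n k) :
    0 < prodP k P x :=
  prod_pos fun i _ => hP (x i) (Fintype.mem_piFinset.1 hx i)

lemma sum_prodP_rpow (hP : ∀ i ∈ Icc 1 n, 0 ≤ P i) (α : ℝ) :
    ∑ x ∈ seqSet n k, prodP k P x ^ α = (∑ i ∈ Icc 1 n, P i ^ α) ^ k := by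
  rw [← Fin.prod_const, prod_univ_sum]
  exact sum_congr rfl fun x hx =>
    (finsetProd_rpow _ _ (fun i _ => hP (x i) (Fintype.mem_piFinset.1 hx i)) α).symm

lemma gmoment_pos (hn : 0 < n) (hP : ∀ i ∈ Icc 1 n, 0 < P i) {g : (Fin k → ℕ) → ℕ}
    (hg : IsRanking n k P g) (ρ : ℝ) : 0 < gmoment n k P g ρ := by
  refine sum_pos (fun x hx => mul_pos (prodP_pos hP hx) (rpow_pos_of_pos ?_ ρ))
    ⟨fun _ => 1, Fintype.mem_piFinset.2 fun _ => mem_Icc.2 ⟨le_rfl, hn⟩⟩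
  exact_mod_cast (hg.1.mapsTo hx).1

theorem log_gmoment_le (hn : 0 < n) (hP : ∀ i ∈ Icc 1 n, 0 < P i) {g : (Fin k → ℕ) → ℕ}
    (hg : IsRanking n k P g) {ρ : ℝ} (hρ : 0 < ρ) :
    log (gmoment n k P g ρ) ≤ k * (ρ * renyiH n (1 / (1 + ρ)) P) := by
  have hS : 0 < ∑ i ∈ Icc 1 n, P i ^ (1 / (1 + ρ)) :=
    sum_pos (fun i hi => rpow_pos_of_pos (hP i hi) _) ⟨1, mem_Icc.2 ⟨le_rfl, hn⟩⟩
  have hbound := moment_rank_le (fun x hx => prodP_pos hP hx) hg.1 hg.2 hρ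
  rw [sum_prodP_rpow (fun i hi => (hP i hi).le)] at hbound
  calc log (gmoment n k P g ρ)
      ≤ log (((∑ i ∈ Icc 1 n, P i ^ (1 / (1 + ρ))) ^ k) ^ (1 + ρ)) :=
        log_le_log (gmoment_pos hn hP hg ρ) hbound
    _ = k * (ρ * renyiH n (1 / (1 + ρ)) P) := by
        rw [log_rpow (by positivity), log_pow, mul_renyiH_eq hρ]
        ring

theorem log_gmoment_ge {m : ℕ} (hm : 0 < m) {Q : ℕ → ℝ} (hQ : ∀ j ∈ Icc 1 m, 0 < Q j)
    {g : (Fin k → ℕ) → ℕ} (hg : IsRanking m k Q g) {ρ : ℝ} (hρ : 0 < ρ) :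
    k * (ρ * renyiH m (1 / (1 + ρ)) Q) ≤ log (gmoment m k Q g ρ) + ρ * log (1 + k * log m) := by
  have hS : 0 < ∑ j ∈ Icc 1 m, Q j ^ (1 / (1 + ρ)) :=
    sum_pos (fun j hj => rpow_pos_of_pos (hQ j hj) _) ⟨1, mem_Icc.2 ⟨le_rfl, hm⟩⟩
  have hG := gmoment_pos hm hQ hg ρ
  have hD : 0 < 1 + k * log m := by
    have := log_natCast_nonneg m
    positivity
  have hbound : (∑ j ∈ Icc 1 m, Q j ^ (1 / (1 + ρ))) ^ k
      ≤ gmoment m k Q g ρ ^ (1 / (1 + ρ)) * (1 + k * log m) ^ (1 - 1 / (1 + ρ)) := by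
    have := sum_rpow_le_moment_rank (fun x hx => (prodP_pos hQ hx).le) hg.1 hρ
    rwa [sum_prodP_rpow (fun j hj => (hQ j hj).le), Nat.cast_pow, log_pow] at this
  have hlog := log_le_log (by positivity) hbound
  rw [log_pow, log_mul (by positivity) (by positivity), log_rpow hG, log_rpow hD] at hlog
  rw [mul_renyiH_eq hρ]
  have h1 : (1 + ρ) * (1 / (1 + ρ)) = 1 := by field_simp
  have h2 : (1 + ρ) * (1 - 1 / (1 + ρ)) = ρ := by field_simp; ring
  linear_combination (1 + ρ) * hlog + log (gmoment m k Q g ρ) * h1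
    + log (1 + k * log m) * h2

end IID

lemma pos_of_le_two_mul {ι : Type*} {s : Finset ι} {q : ι → ℝ} (hs : 0 < ∑ i ∈ s, q i)
    (hq2 : ∀ i ∈ s, ∀ j ∈ s, q i ≤ 2 * q j) {j : ι} (hj : j ∈ s) : 0 < q j := by
  obtain ⟨i, hi, hpos⟩ := exists_lt_of_sum_lt (sum_const_zero.trans_lt hs)
  linarith [hq2 i hi j hj]

section Compression

variable {n m : ℕ} {P : ℕ → ℝ}

lemma sum_Icc_eq_add_sum_Icc (F : ℕ → ℝ) {a b : ℕ} (hab : a ≤ b) :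
    ∑ i ∈ Icc a b, F i = F a + ∑ i ∈ Icc (a + 1) b, F i := by
  rw [Icc_add_one_left_eq_Ioc, ← sum_Ioc_add_eq_sum_Icc hab, add_comm]

lemma sum_Icc_one_eq_sum_add_sum (F : ℕ → ℝ) {h b : ℕ} (hhb : h ≤ b) :
    ∑ i ∈ Icc 1 b, F i = ∑ i ∈ Icc 1 h, F i + ∑ i ∈ Icc (h + 1) b, F i := by
  have hIcc : ∀ c : ℕ, Icc 1 c = Ioc 0 c := fun c => Icc_add_one_left_eq_Ioc 0 c
  rw [hIcc, hIcc, Icc_add_one_left_eq_Ioc]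
  exact (sum_Ioc_consecutive F h.zero_le hhb).symm

/-- `X̃_m` with `n*` replaced by a parameter `h`. -/
noncomputable def flattenTail (n m h : ℕ) (P : ℕ → ℝ) (j : ℕ) : ℝ :=
  if j ≤ h then P j else ((m : ℝ) - h)⁻¹ * ∑ i ∈ Icc (h + 1) n, P i

def nStarSet (n m : ℕ) (P : ℕ → ℝ) : Set ℕ :=
  {i : ℕ | 1 ≤ i ∧ i ≤ m - 1 ∧ ((m : ℝ) - (i : ℝ))⁻¹ * ∑ j ∈ Icc (i + 1) n, P j ≤ P i}

lemma nStar_mem_nStarSet (hm : 2 ≤ m) (hmn : m < n) (hP : IsPMF n P) (h1 : 1 / (m : ℝ) ≤ P 1) :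
    nStar n m P ∈ nStarSet n m P := by
  refine Nat.sSup_mem ⟨1, le_rfl, by omega, ?_⟩ ⟨m - 1, fun i hi => hi.2.1⟩
  have hm' : (2 : ℝ) ≤ m := by exact_mod_cast hm
  have hrest : ∑ j ∈ Icc 2 n, P j = 1 - P 1 := by
    rw [← hP.2, sum_Icc_eq_add_sum_Icc P (by omega : 1 ≤ n)]
    ring
  rw [Nat.cast_one, hrest, inv_mul_le_iff₀ (by linarith)]
  rw [div_le_iff₀ (by linarith)] at h1
  linarith

lemma nStar_lt (hm : 2 ≤ m) (hmn : m < n) (hP : IsPMF n P) (h1 : 1 / (m : ℝ) ≤ P 1) :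
    nStar n m P < m := by
  have := (nStar_mem_nStarSet hm hmn hP h1).2.1
  omega

/-- By maximality of `n*`, the symbol `n* + 1` fails the defining inequality. -/
lemma sub_one_mul_lt_sum_nStar (hm : 2 ≤ m) (hmn : m < n) (hP : IsPMF n P)
    (h1 : 1 / (m : ℝ) ≤ P 1) :
    ((m : ℝ) - nStar n m P - 1) * P (nStar n m P + 1) < ∑ j ∈ Icc (nStar n m P + 2) n, P j := by
  set h := nStar n m P
  have hhm : h < m := nStar_lt hm hmn hP h1
  by_cases hlast : h + 1 ≤ m - 1
  · have hnot : h + 1 ∉ nStarSet n m P := fun hmem =>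
      (le_csSup ⟨m - 1, fun i hi => hi.2.1⟩ hmem : h + 1 ≤ h).not_gt (Nat.lt_succ_self h)
    have hpos : (0 : ℝ) < m - h - 1 := by
      have : ((h + 2 : ℕ) : ℝ) ≤ m := by exact_mod_cast (by omega : h + 2 ≤ m)
      push_cast at this
      linarith
    simp only [nStarSet, Set.mem_ofPred_eq, not_and, not_le] at hnot
    have := hnot (by omega) hlast
    push_cast at this
    rwa [show (m : ℝ) - (h + 1) = m - h - 1 by ring, lt_inv_mul_iff₀ hpos] at this
  · have : ((m : ℝ) - h - 1) = 0 := by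
      have : h + 1 = m := by omega
      rw [← this]; push_cast; ring
    rw [this, zero_mul]
    exact sum_pos (fun j hj => hP.1 j (mem_Icc.2 ⟨by grind, (mem_Icc.1 hj).2⟩))
      ⟨h + 2, mem_Icc.2 ⟨le_rfl, by omega⟩⟩

lemma mul_lt_sum_tail_nStar (hm : 2 ≤ m) (hmn : m < n) (hP : IsPMF n P) (hdec : DecOn n P)
    (h1 : 1 / (m : ℝ) ≤ P 1) {i : ℕ} (hi : i ∈ Icc (nStar n m P + 1) n) :
    ((m : ℝ) - nStar n m P) * P i < ∑ j ∈ Icc (nStar n m P + 1) n, P j := by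
  set h := nStar n m P
  have hhm : h < m := nStar_lt hm hmn hP h1
  have hPi : P i ≤ P (h + 1) :=
    hdec (h + 1) (mem_Icc.2 ⟨by omega, by omega⟩) i (mem_Icc.2 ⟨by grind, (mem_Icc.1 hi).2⟩)
      (mem_Icc.1 hi).1
  have hmh : (0 : ℝ) ≤ m - h := by
    have : (h : ℝ) < m := by exact_mod_cast hhm
    linarith
  rw [sum_Icc_eq_add_sum_Icc P (by omega : h + 1 ≤ n)]
  calc ((m : ℝ) - h) * P i ≤ (m - h) * P (h + 1) := mul_le_mul_of_nonneg_left hPi hmh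
    _ < _ := by linarith [sub_one_mul_lt_sum_nStar hm hmn hP h1]

theorem exists_tildeX_eq_flattenTail (hm : 2 ≤ m) (hmn : m < n) (hP : IsPMF n P)
    (hdec : DecOn n P) :
    ∃ h < m, (∀ i ∈ Icc (h + 1) n, ((m : ℝ) - h) * P i < ∑ j ∈ Icc (h + 1) n, P j) ∧
      ∀ j ∈ Icc 1 m, tildeX n m P j = flattenTail n m h P j := by
  by_cases hsmall : P 1 < 1 / (m : ℝ)
  · refine ⟨0, by omega, fun i hi => ?_, fun j hj => ?_⟩
    · have hPi : P i ≤ P 1 := hdec 1 (mem_Icc.2 ⟨le_rfl, by omega⟩) i hi (mem_Icc.1 hi).1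
      have hm0 : (0 : ℝ) < m := by positivity
      rw [zero_add, hP.2, Nat.cast_zero, sub_zero]
      rw [lt_div_iff₀ hm0] at hsmall
      nlinarith
    · rw [tildeX, if_pos hsmall, flattenTail, if_neg (by grind), zero_add, hP.2]
      simp
  · have h1 := le_of_not_gt hsmall
    exact ⟨nStar n m P, nStar_lt hm hmn hP h1,
      fun i hi => mul_lt_sum_tail_nStar hm hmn hP hdec h1 hi,
      fun j _ => by rw [tildeX, if_neg hsmall, flattenTail]⟩

def packMap {h : ℕ} (g : Icc (h + 1) n → Icc (h + 1) m) (i : ℕ) : ℕ :=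
  if hi : i ∈ Icc (h + 1) n then g ⟨i, hi⟩ else i

section PackMap

variable {h : ℕ} (g : Icc (h + 1) n → Icc (h + 1) m)

lemma packMap_of_mem {i : ℕ} (hi : i ∈ Icc (h + 1) n) : packMap g i = g ⟨i, hi⟩ := dif_pos hi

lemma packMap_of_le {i : ℕ} (hih : i ≤ h) : packMap g i = i :=
  dif_neg fun hi => by have := (mem_Icc.1 hi).1; omega

lemma lt_packMap {i : ℕ} (hi : i ∈ Icc (h + 1) n) : h < packMap g i := by
  rw [packMap_of_mem g hi]
  exact (mem_Icc.1 (g ⟨i, hi⟩).2).1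

lemma packMap_mem_Icc (hhm : h < m) {i : ℕ} (hi : i ∈ Icc 1 n) : packMap g i ∈ Icc 1 m := by
  by_cases hih : i ≤ h
  · rw [packMap_of_le g hih]
    exact mem_Icc.2 ⟨(mem_Icc.1 hi).1, by omega⟩
  · rw [packMap_of_mem g (mem_Icc.2 ⟨by omega, (mem_Icc.1 hi).2⟩)]
    exact mem_Icc.2 ⟨by grind, (mem_Icc.1 (g _).2).2⟩

lemma push_packMap_of_le (hhn : h ≤ n) {j : ℕ} (hj : j ∈ Icc 1 h) :
    push n (packMap g) P j = P j := by
  have hjh := (mem_Icc.1 hj).2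
  have hfilter : (Icc 1 n).filter (packMap g · = j) = {j} := by
    ext i
    simp only [mem_filter, mem_singleton]
    constructor
    · rintro ⟨hi, hgi⟩
      by_cases hih : i ≤ h
      · rwa [packMap_of_le g hih] at hgi
      · have := lt_packMap g (mem_Icc.2 ⟨by omega, (mem_Icc.1 hi).2⟩)
        omega
    · rintro rfl
      exact ⟨mem_Icc.2 ⟨(mem_Icc.1 hj).1, by omega⟩, packMap_of_le g hjh⟩
  rw [push, hfilter, sum_singleton]

lemma push_packMap_eq_load {j : ℕ} (hj : j ∈ Icc (h + 1) m) :
    push n (packMap g) P j = load (fun i : Icc (h + 1) n => P i) g ⟨j, hj⟩ := by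
  have hfilter : (Icc 1 n).filter (packMap g · = j) = (Icc (h + 1) n).filter (packMap g · = j) := by
    ext i
    simp only [mem_filter, mem_Icc]
    constructor
    · rintro ⟨hi, hgi⟩
      refine ⟨⟨?_, hi.2⟩, hgi⟩
      by_contra! hih
      rw [packMap_of_le g (by omega)] at hgi
      have := (mem_Icc.1 hj).1
      omega
    · rintro ⟨hi, hgi⟩
      exact ⟨⟨by omega, hi.2⟩, hgi⟩
  rw [push, hfilter, load, sum_filter, sum_filter, ← sum_coe_sort (Icc (h + 1) n)]
  refine sum_congr rfl fun i _ => ?_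
  simp only [packMap_of_mem g i.2, Subtype.ext_iff]

end PackMap

theorem exists_push_le_two_mul {h : ℕ} (hhm : h < m) (hmn : m ≤ n)
    (hP : ∀ i ∈ Icc 1 n, 0 < P i)
    (htail : ∀ i ∈ Icc (h + 1) n, ((m : ℝ) - h) * P i < ∑ j ∈ Icc (h + 1) n, P j) :
    ∃ f : ℕ → ℕ, (∀ i ∈ Icc 1 n, f i ∈ Icc 1 m) ∧ (∀ j ∈ Icc 1 h, push n f P j = P j) ∧
      (∑ j ∈ Icc (h + 1) m, push n f P j = ∑ i ∈ Icc (h + 1) n, P i) ∧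
      ∀ j ∈ Icc (h + 1) m, ∀ j' ∈ Icc (h + 1) m, push n f P j ≤ 2 * push n f P j' := by
  have : Nonempty (Icc (h + 1) m) := ⟨⟨h + 1, mem_Icc.2 ⟨le_rfl, hhm⟩⟩⟩
  have hcard : (Fintype.card (Icc (h + 1) m) : ℝ) = m - h := by
    rw [Fintype.card_coe, Nat.card_Icc, Nat.add_sub_add_right, Nat.cast_sub hhm.le]
  obtain ⟨g, hg⟩ := exists_load_le_two_mul (w := fun i : Icc (h + 1) n => P i)
    (fun i => hP i (mem_Icc.2 ⟨by grind, (mem_Icc.1 i.2).2⟩))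
    fun i => by rw [hcard, sum_coe_sort (Icc (h + 1) n) P]; exact htail i i.2
  refine ⟨packMap g, fun i => packMap_mem_Icc g hhm, fun j => push_packMap_of_le g (by omega),
    ?_, fun j hj j' hj' => ?_⟩
  · rw [← sum_coe_sort (Icc (h + 1) m), ← sum_coe_sort (Icc (h + 1) n) P,
      sum_congr rfl fun (b : Icc (h + 1) m) _ => push_packMap_eq_load g b.2]
    exact sum_load _ g
  · rw [push_packMap_eq_load g hj, push_packMap_eq_load g hj']
    exact hg _ _

lemma flattenTail_pos {h : ℕ} (hhm : h < m) (hhn : h < n) (hP : ∀ i ∈ Icc 1 n, 0 < P i)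
    {j : ℕ} (hj : j ∈ Icc 1 m) : 0 < flattenTail n m h P j := by
  unfold flattenTail
  split_ifs with hjh
  · exact hP j (mem_Icc.2 ⟨(mem_Icc.1 hj).1, by omega⟩)
  · have : (h : ℝ) < m := by exact_mod_cast hhm
    have : 0 < ∑ i ∈ Icc (h + 1) n, P i :=
      sum_pos (fun i hi => hP i (mem_Icc.2 ⟨by grind, (mem_Icc.1 hi).2⟩))
        ⟨h + 1, mem_Icc.2 ⟨le_rfl, hhn⟩⟩
    have : 0 < (m : ℝ) - h := by linarith
    positivity

lemma sum_rpow_flattenTail_le {h : ℕ} {α : ℝ} (h0 : 0 < α) (h1 : α < 1) (hhm : h < m)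
    {Q : ℕ → ℝ} (hQ : ∀ j ∈ Icc 1 m, 0 < Q j) (hhead : ∀ j ∈ Icc 1 h, Q j = P j)
    (hsum : ∑ j ∈ Icc (h + 1) m, Q j = ∑ i ∈ Icc (h + 1) n, P i)
    (hQ2 : ∀ j ∈ Icc (h + 1) m, ∀ j' ∈ Icc (h + 1) m, Q j ≤ 2 * Q j') :
    ∑ j ∈ Icc 1 m, flattenTail n m h P j ^ α ≤ (ratioTwoConst α)⁻¹ * ∑ j ∈ Icc 1 m, Q j ^ α := by
  set σ := ∑ i ∈ Icc (h + 1) n, P i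
  have hc := ratioTwoConst_pos h0 h1
  have hM : (((m - h : ℕ) : ℝ)) = (m : ℝ) - h := Nat.cast_sub hhm.le
  have hMpos : (0 : ℝ) < (m : ℝ) - h := by rw [← hM]; exact_mod_cast Nat.sub_pos_of_lt hhm
  have hQtail : ∀ j ∈ Icc (h + 1) m, 0 < Q j :=
    fun j hj => hQ j (mem_Icc.2 ⟨by grind, (mem_Icc.1 hj).2⟩)
  have hσ : 0 < σ := hsum ▸ sum_pos hQtail ⟨h + 1, mem_Icc.2 ⟨le_rfl, hhm⟩⟩
  have hhead_eq : ∑ j ∈ Icc 1 h, flattenTail n m h P j ^ α = ∑ j ∈ Icc 1 h, Q j ^ α :=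
    sum_congr rfl fun j hj => by rw [flattenTail, if_pos (mem_Icc.1 hj).2, hhead j hj]
  have hhead_nonneg : 0 ≤ ∑ j ∈ Icc 1 h, Q j ^ α :=
    sum_nonneg fun j hj => (rpow_pos_of_pos (hQ j (mem_Icc.2 ⟨(mem_Icc.1 hj).1, by grind⟩)) α).le
  have htail_eq : ∑ j ∈ Icc (h + 1) m, flattenTail n m h P j ^ α
      = σ ^ α * ((m : ℝ) - h) ^ (1 - α) := by
    rw [sum_congr rfl fun j hj => by rw [flattenTail, if_neg (by grind)], sum_const,
      Nat.card_Icc, nsmul_eq_mul, Nat.add_sub_add_right, hM, mul_rpow (by positivity) hσ.le,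
      inv_rpow hMpos.le, rpow_sub hMpos, rpow_one]
    field_simp
  have htail_le := ratioTwoConst_mul_le_sum_rpow h0 h1 ⟨h + 1, mem_Icc.2 ⟨le_rfl, hhm⟩⟩
    hQtail hQ2
  rw [hsum, Nat.card_Icc, Nat.add_sub_add_right, hM] at htail_le
  rw [sum_Icc_one_eq_sum_add_sum _ hhm.le, sum_Icc_one_eq_sum_add_sum _ hhm.le, hhead_eq, htail_eq,
    le_inv_mul_iff₀ hc]
  nlinarith [ratioTwoConst_le_one h0 h1]

theorem exists_renyiH_tildeX_le (hm : 2 ≤ m) (hmn : m < n) (hP : IsPMF n P)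
    (hdec : DecOn n P) :
    ∃ f : ℕ → ℕ, (∀ i ∈ Icc 1 n, f i ∈ Icc 1 m) ∧ (∀ j ∈ Icc 1 m, 0 < push n f P j) ∧
      ∀ α, 0 < α → α < 1 → renyiH m α (tildeX n m P) ≤ renyiH m α (push n f P) + vFun α := by
  obtain ⟨h, hhm, htail, htX⟩ := exists_tildeX_eq_flattenTail hm hmn hP hdec
  obtain ⟨f, hf, hhead, hsum, hQ2⟩ := exists_push_le_two_mul hhm hmn.le hP.1 htail
  have hQpos : ∀ j ∈ Icc 1 m, 0 < push n f P j := by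
    intro j hj
    by_cases hjh : j ≤ h
    · rw [hhead j (mem_Icc.2 ⟨(mem_Icc.1 hj).1, hjh⟩)]
      exact hP.1 j (mem_Icc.2 ⟨(mem_Icc.1 hj).1, by omega⟩)
    refine pos_of_le_two_mul ?_ hQ2 (mem_Icc.2 ⟨by omega, (mem_Icc.1 hj).2⟩)
    rw [hsum]
    exact sum_pos (fun i hi => hP.1 i (mem_Icc.2 ⟨by grind, (mem_Icc.1 hi).2⟩))
      ⟨h + 1, mem_Icc.2 ⟨le_rfl, by omega⟩⟩
  refine ⟨f, hf, hQpos, fun α h0 h1 => ?_⟩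
  have hST : 0 < ∑ j ∈ Icc 1 m, tildeX n m P j ^ α :=
    sum_pos (fun j hj => rpow_pos_of_pos
      (htX j hj ▸ flattenTail_pos hhm (by omega) hP.1 hj) α) ⟨1, mem_Icc.2 ⟨le_rfl, by omega⟩⟩
  have hSQ : 0 < ∑ j ∈ Icc 1 m, push n f P j ^ α :=
    sum_pos (fun j hj => rpow_pos_of_pos (hQpos j hj) α) ⟨1, mem_Icc.2 ⟨le_rfl, by omega⟩⟩
  have hbound := sum_rpow_flattenTail_le h0 h1 hhm hQpos hhead hsum hQ2
  rw [← sum_congr rfl fun j hj => congrArg (· ^ α) (htX j hj)] at hbound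
  have hlog := log_le_log hST hbound
  rw [log_mul (inv_pos.2 (ratioTwoConst_pos h0 h1)).ne' hSQ.ne', log_inv,
    log_ratioTwoConst h0 h1] at hlog
  have h1' : 0 < 1 - α := by linarith
  simp only [renyiH, if_neg h1.ne]
  calc (1 - α)⁻¹ * log (∑ j ∈ Icc 1 m, tildeX n m P j ^ α)
      ≤ (1 - α)⁻¹ * ((1 - α) * vFun α + log (∑ j ∈ Icc 1 m, push n f P j ^ α)) := by
        gcongr
        linarith
    _ = (1 - α)⁻¹ * log (∑ j ∈ Icc 1 m, push n f P j ^ α) + vFun α := by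
        field_simp
        ring

end Compression

end Guessing

open Guessing

theorem stmt18 (n m k : ℕ) (hm : 2 ≤ m) (hmn : m < n) (hk : 1 ≤ k)
    (P : ℕ → ℝ) (hP : IsPMF n P) (hdec : DecOn n P) :
    ∃ f : ℕ → ℕ, (∀ i ∈ Finset.Icc 1 n, f i ∈ Finset.Icc 1 m) ∧
      ∀ gX gY : (Fin k → ℕ) → ℕ,
        IsRanking n k P gX → IsRanking m k (push n f P) gY →
          ∀ ρ : ℝ, 0 < ρ →
            (1 / (k : ℝ)) *
                Real.log (gmoment n k P gX ρ / gmoment m k (push n f P) gY ρ)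
              ≤ ρ * (renyiH n (1 / (1 + ρ)) P - renyiH m (1 / (1 + ρ)) (tildeX n m P)
                    + vFun (1 / (1 + ρ)))
                + (ρ / (k : ℝ)) * Real.log (1 + (k : ℝ) * Real.log m) := by
  obtain ⟨f, hf, hQ, hH⟩ := exists_renyiH_tildeX_le hm hmn hP hdec
  refine ⟨f, hf, fun gX gY hgX hgY ρ hρ => ?_⟩
  have hX := log_gmoment_le (by omega) hP.1 hgX hρ
  have hY := log_gmoment_ge (by omega) hQ hgY hρ
  have hT := hH (1 / (1 + ρ)) (by positivity) (by rw [div_lt_one (by positivity)]; linarith)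
  have hk' : (0 : ℝ) < k := by exact_mod_cast hk
  have hmain : Real.log (gmoment n k P gX ρ) - Real.log (gmoment m k (push n f P) gY ρ)
      ≤ k * (ρ * (renyiH n (1 / (1 + ρ)) P - renyiH m (1 / (1 + ρ)) (tildeX n m P)
          + vFun (1 / (1 + ρ)))) + ρ * Real.log (1 + k * Real.log m) := by
    nlinarith [mul_le_mul_of_nonneg_left hT (by positivity : (0 : ℝ) ≤ k * ρ)]
  calc (1 / (k : ℝ)) * Real.log (gmoment n k P gX ρ / gmoment m k (push n f P) gY ρ)
      = (1 / (k : ℝ)) * (Real.log (gmoment n k P gX ρ)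
          - Real.log (gmoment m k (push n f P) gY ρ)) := by
        rw [Real.log_div (gmoment_pos (by omega) hP.1 hgX ρ).ne'
          (gmoment_pos (by omega) hQ hgY ρ).ne']
    _ ≤ (1 / (k : ℝ)) * (k * (ρ * (renyiH n (1 / (1 + ρ)) P
          - renyiH m (1 / (1 + ρ)) (tildeX n m P) + vFun (1 / (1 + ρ))))
          + ρ * Real.log (1 + k * Real.log m)) := by gcongr
    _ = _ := by field_simp
end

section
/- Let n > m ≥ 2, k ≥ 1 and D ≥ 2 be integers, let P_X be a probability mass function strictly positive on a set X with |X| = n and P_X(1) ≥ … ≥ P_X(n), let f ∈ F_{n,m} be a deterministic function, and let P_Y on Y = {1,…,m} be given by P_Y(y) = Σ_{x: f(x)=y} P_X(x). Let X̃_m be as follows: if P_X(1) < 1/m, X̃_m is uniform on {1,…,m}; otherwise P_{X̃_m}(i) = P_X(i) for i ≤ n* and P_{X̃_m}(i) = (1/(m−n*))·Σ_{j=n*+1}^{n} P_X(j) for n* < i ≤ m, where n* is the maximal integer i ∈ {1,…,m−1} with P_X(i) ≥ (1/(m−i))·Σ_{j=i+1}^{n} P_X(j). Then for every ρ > 0 there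 exists a length function ℓ̄: Y^k → ℕ satisfying the Kraft inequality Σ_{y^k ∈ Y^k} D^{−ℓ̄(y^k)} ≤ 1 such that, for every length function ℓ: X^k → ℕ satisfying Σ_{x^k ∈ X^k} D^{−ℓ(x^k)} ≤ 1, the scaled cumulant generating functions Λ_k(ρ) := (1/k)·log_D(Σ_{x^k} P_{X^k}(x^k)·D^{ρ·ℓ(x^k)}) and Λ̄_k(ρ) := (1/k)·log_D(Σ_{y^k} P_{Y^k}(y^k)·D^{ρ·ℓ̄(y^k)}) satisfy Λ_k(ρ) − Λ̄_k(ρ) ≥ (ρ/log D)·[H_{1/(1+ρ)}(X) − H_{1/(1+ρ)}(X̃_m)] − ρ/k. -/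
/-!
Both cumulant generating functions are controlled by Campbell's coding theorem, with
`α = 1 / (1 + ρ)`. For any Kraft code on `X^k`, Hölder's inequality gives
`Λ_k(ρ) ≥ (ρ / log D) H_α(X)`. On `Y^k`, the Shannon-type code `⌈-log_D Q^k(y)⌉` of an i.i.d. law
`Q^k` gives `Λ̄_k(ρ) ≤ ρ / k + log_D ∑_y P_Y(y) Q(y)^(-ρ)`.

Take for `Q` the tilted law `X̃_m^α / ∑ X̃_m^α`, placed on `Y` along the decreasing rearrangement
of `P_Y`. The `r` largest masses of `P_Y` carry at least `P_X(1) + ⋯ + P_X(r)`, because `f` maps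
`{1,…,r}` onto at most `r` points. `X̃_m` keeps the first `n*` masses of `P_X` and spreads the
rest evenly, so the sorted `P_Y` majorizes `X̃_m`. Abel summation against the nondecreasing
weights `X̃_m(i)^(α-1)` then gives `∑ P_Y Q^(-ρ) ≤ (∑ X̃_m^α)^(1+ρ)`, and `log_D` of the right
side is `(ρ / log D) H_α(X̃_m)`.
-/

open Finset

open Real

lemma sum_Icc_one_eq_sum_range (r : ℕ) (g : ℕ → ℝ) :
    ∑ j ∈ Icc 1 r, g j = ∑ i ∈ range r, g (i + 1) := by
  rw [← Finset.Ico_add_one_right_eq_Icc, Finset.sum_Ico_eq_sum_range]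
  simp [add_comm]

lemma sum_Icc_one_add_sum_Icc {t n : ℕ} (htn : t ≤ n) (g : ℕ → ℝ) :
    ∑ j ∈ Icc 1 t, g j + ∑ j ∈ Icc (t + 1) n, g j = ∑ j ∈ Icc 1 n, g j := by
  simp only [Finset.Icc_add_one_left_eq_Ioc,
    show Icc 1 t = Ioc 0 t from Finset.Icc_add_one_left_eq_Ioc 0 t,
    show Icc 1 n = Ioc 0 n from Finset.Icc_add_one_left_eq_Ioc 0 n]
  exact Finset.sum_Ioc_consecutive g (Nat.zero_le t) htn

lemma sum_prodP (n k : ℕ) (P : ℕ → ℝ) :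
    ∑ x ∈ seqSet n k, prodP k P x = (∑ j ∈ Icc 1 n, P j) ^ k := by
  rw [seqSet, ← Fin.prod_const, Finset.prod_univ_sum]
  rfl

lemma mem_Icc_of_mem_seqSet {n k : ℕ} {x : Fin k → ℕ} (hx : x ∈ seqSet n k) (i : Fin k) :
    x i ∈ Icc 1 n :=
  Fintype.mem_piFinset.mp hx i

lemma prodP_nonneg {n k : ℕ} {P : ℕ → ℝ} (hP : ∀ j ∈ Icc 1 n, 0 ≤ P j) {x : Fin k → ℕ}
    (hx : x ∈ seqSet n k) : 0 ≤ prodP k P x :=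
  Finset.prod_nonneg fun i _ => hP _ (mem_Icc_of_mem_seqSet hx i)

lemma prodP_rpow {n k : ℕ} {P : ℕ → ℝ} (hP : ∀ j ∈ Icc 1 n, 0 ≤ P j) {x : Fin k → ℕ}
    (hx : x ∈ seqSet n k) (r : ℝ) : prodP k P x ^ r = prodP k (fun j => P j ^ r) x :=
  (Real.finsetProd_rpow _ _ (fun i _ => hP _ (mem_Icc_of_mem_seqSet hx i)) r).symm

lemma prodP_mul (k : ℕ) (P Q : ℕ → ℝ) (x : Fin k → ℕ) :
    prodP k P x * prodP k Q x = prodP k (fun j => P j * Q j) x :=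
  Finset.prod_mul_distrib.symm

lemma one_le_sum_prodP_mul_rpow {n k : ℕ} {D : ℝ} (hD : 1 ≤ D) {P : ℕ → ℝ}
    (hP : ∀ j ∈ Icc 1 n, 0 ≤ P j) (hPsum : ∑ j ∈ Icc 1 n, P j = 1) (ℓ : (Fin k → ℕ) → ℕ)
    {ρ : ℝ} (hρ : 0 ≤ ρ) :
    1 ≤ ∑ x ∈ seqSet n k, prodP k P x * D ^ (ρ * ℓ x) := by
  calc (1 : ℝ) = ∑ x ∈ seqSet n k, prodP k P x := by rw [sum_prodP, hPsum, one_pow]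
    _ ≤ ∑ x ∈ seqSet n k, prodP k P x * D ^ (ρ * ℓ x) :=
        Finset.sum_le_sum fun x hx => le_mul_of_one_le_right (prodP_nonneg hP hx)
          (Real.one_le_rpow hD (by positivity))

/-- Campbell's converse: Hölder's inequality with exponents `1 + ρ`, `(1 + ρ) / ρ` applied to
`(p D^{ρℓ})^{1/(1+ρ)}` and `D^{-ρℓ/(1+ρ)}`. -/
lemma sum_rpow_rpow_le_sum_mul_rpow_of_kraft {ι : Type*} (s : Finset ι) {D ρ : ℝ} (hD : 0 < D)
    (hρ : 0 < ρ) (p : ι → ℝ) (hp : ∀ x ∈ s, 0 ≤ p x) (ℓ : ι → ℕ)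
    (hℓ : ∑ x ∈ s, D ^ (-(ℓ x : ℝ)) ≤ 1) :
    (∑ x ∈ s, p x ^ (1 / (1 + ρ))) ^ (1 + ρ) ≤ ∑ x ∈ s, p x * D ^ (ρ * ℓ x) := by
  have hpq : (1 + ρ).HolderConjugate ((1 + ρ) / ρ) := by
    rw [Real.holderConjugate_iff]
    exact ⟨by linarith, by field_simp⟩
  have hholder := Real.inner_le_Lp_mul_Lq_of_nonneg s hpq
    (f := fun x => (p x * D ^ (ρ * ℓ x)) ^ (1 / (1 + ρ)))
    (g := fun x => (D ^ (-(ℓ x : ℝ))) ^ (ρ / (1 + ρ)))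
    (fun x hx => by have := hp x hx; positivity) (fun x _ => by positivity)
  have hfg : ∀ x ∈ s, (p x * D ^ (ρ * ℓ x)) ^ (1 / (1 + ρ)) * (D ^ (-(ℓ x : ℝ))) ^ (ρ / (1 + ρ))
      = p x ^ (1 / (1 + ρ)) := by
    intro x hx
    rw [Real.mul_rpow (hp x hx) (by positivity), mul_assoc, ← Real.rpow_mul hD.le,
      ← Real.rpow_mul hD.le, ← Real.rpow_add hD]
    rw [show ρ * ℓ x * (1 / (1 + ρ)) + -ℓ x * (ρ / (1 + ρ)) = 0 by field_simp; ring,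
      Real.rpow_zero, mul_one]
  have hf : ∀ x ∈ s, ((p x * D ^ (ρ * ℓ x)) ^ (1 / (1 + ρ))) ^ (1 + ρ) = p x * D ^ (ρ * ℓ x) :=
    fun x hx => by
      rw [← Real.rpow_mul (by have := hp x hx; positivity), one_div_mul_cancel (by positivity),
        Real.rpow_one]
  have hg : ∀ x ∈ s, ((D ^ (-(ℓ x : ℝ))) ^ (ρ / (1 + ρ))) ^ ((1 + ρ) / ρ) = D ^ (-(ℓ x : ℝ)) :=
    fun x _ => by
      rw [← Real.rpow_mul (by positivity), div_mul_div_comm, mul_comm ρ,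
        div_self (by positivity), Real.rpow_one]
  rw [Finset.sum_congr rfl hfg, Finset.sum_congr rfl hf, Finset.sum_congr rfl hg] at hholder
  have hS : 0 ≤ ∑ x ∈ s, p x * D ^ (ρ * ℓ x) :=
    Finset.sum_nonneg fun x hx => by have := hp x hx; positivity
  have hA : 0 ≤ ∑ x ∈ s, p x ^ (1 / (1 + ρ)) :=
    Finset.sum_nonneg fun x hx => by have := hp x hx; positivity
  have hkraft : (∑ x ∈ s, D ^ (-(ℓ x : ℝ))) ^ (1 / ((1 + ρ) / ρ)) ≤ 1 :=
    Real.rpow_le_one (Finset.sum_nonneg fun x _ => by positivity) hℓ (by positivity)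
  calc (∑ x ∈ s, p x ^ (1 / (1 + ρ))) ^ (1 + ρ)
      ≤ ((∑ x ∈ s, p x * D ^ (ρ * ℓ x)) ^ (1 / (1 + ρ))) ^ (1 + ρ) := by
        gcongr
        exact hholder.trans (mul_le_of_le_one_right (by positivity) hkraft)
    _ = ∑ x ∈ s, p x * D ^ (ρ * ℓ x) := by
        rw [← Real.rpow_mul hS, one_div_mul_cancel (by positivity), Real.rpow_one]

lemma rpow_neg_natCeil_neg_logb_le {D w : ℝ} (hD : 1 < D) (hw : 0 < w) :
    D ^ (-(⌈-logb D w⌉₊ : ℝ)) ≤ w := by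
  calc D ^ (-(⌈-logb D w⌉₊ : ℝ)) ≤ D ^ logb D w :=
        Real.rpow_le_rpow_of_exponent_le hD.le (by linarith [Nat.le_ceil (-logb D w)])
    _ = w := Real.rpow_logb (by positivity) hD.ne' hw

lemma rpow_mul_natCeil_neg_logb_le {D w ρ : ℝ} (hD : 1 < D) (hw : 0 < w) (hw1 : w ≤ 1)
    (hρ : 0 ≤ ρ) :
    D ^ (ρ * ⌈-logb D w⌉₊) ≤ D ^ ρ * w ^ (-ρ) := by
  have hceil : (⌈-logb D w⌉₊ : ℝ) < -logb D w + 1 :=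
    Nat.ceil_lt_add_one (neg_nonneg.2 (Real.logb_nonpos hD hw.le hw1))
  calc D ^ (ρ * ⌈-logb D w⌉₊) ≤ D ^ (ρ + logb D w * -ρ) :=
        Real.rpow_le_rpow_of_exponent_le hD.le (by nlinarith)
    _ = D ^ ρ * w ^ (-ρ) := by
        rw [Real.rpow_add (by positivity), Real.rpow_mul (by positivity),
          Real.rpow_logb (by positivity) hD.ne' hw]

/-- Campbell's direct part, witnessed by the Shannon-type lengths `⌈-log_D Q^K(y)⌉`. -/
lemma exists_kraft_sum_le (M K D : ℕ) (hD : 2 ≤ D) {ρ : ℝ} (hρ : 0 ≤ ρ)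
    (P Q : ℕ → ℝ) (hP : ∀ j ∈ Icc 1 M, 0 ≤ P j) (hQ : ∀ j ∈ Icc 1 M, 0 < Q j)
    (hQsum : ∑ j ∈ Icc 1 M, Q j = 1) :
    ∃ ℓ : (Fin K → ℕ) → ℕ, Kraft M K D ℓ ∧
      ∑ y ∈ seqSet M K, prodP K P y * (D : ℝ) ^ (ρ * ℓ y)
        ≤ (D : ℝ) ^ ρ * (∑ j ∈ Icc 1 M, P j * Q j ^ (-ρ)) ^ K := by
  have hD1 : (1 : ℝ) < D := by exact_mod_cast hD
  have hsum : ∑ y ∈ seqSet M K, prodP K Q y = 1 := by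
    rw [sum_prodP, hQsum, one_pow]
  have hw : ∀ y ∈ seqSet M K, 0 < prodP K Q y := fun y hy =>
    Finset.prod_pos fun i _ => hQ _ (mem_Icc_of_mem_seqSet hy i)
  have hw1 : ∀ y ∈ seqSet M K, prodP K Q y ≤ 1 := fun y hy =>
    hsum ▸ Finset.single_le_sum (fun z hz => (hw z hz).le) hy
  refine ⟨fun y => ⌈-logb D (prodP K Q y)⌉₊, ?_, ?_⟩
  · calc ∑ y ∈ seqSet M K, (D : ℝ) ^ (-(⌈-logb D (prodP K Q y)⌉₊ : ℝ))
        ≤ ∑ y ∈ seqSet M K, prodP K Q y :=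
          Finset.sum_le_sum fun y hy => rpow_neg_natCeil_neg_logb_le hD1 (hw y hy)
      _ = 1 := hsum
  · calc ∑ y ∈ seqSet M K, prodP K P y * (D : ℝ) ^ (ρ * ⌈-logb D (prodP K Q y)⌉₊)
        ≤ ∑ y ∈ seqSet M K, prodP K P y * ((D : ℝ) ^ ρ * prodP K Q y ^ (-ρ)) := by
          refine Finset.sum_le_sum fun y hy => mul_le_mul_of_nonneg_left
            (rpow_mul_natCeil_neg_logb_le hD1 (hw y hy) (hw1 y hy) hρ) ?_
          exact prodP_nonneg hP hy
      _ = (D : ℝ) ^ ρ * (∑ j ∈ Icc 1 M, P j * Q j ^ (-ρ)) ^ K := by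
          rw [← sum_prodP, Finset.mul_sum]
          refine Finset.sum_congr rfl fun y hy => ?_
          rw [prodP_rpow (fun j hj => (hQ j hj).le) hy, mul_left_comm, prodP_mul]

lemma pow_rpow_le_sum_prodP_mul_rpow_of_kraft (N K D : ℕ) (hD : 2 ≤ D) {ρ : ℝ} (hρ : 0 < ρ)
    (P : ℕ → ℝ) (hP : ∀ i ∈ Icc 1 N, 0 ≤ P i) (ℓ : (Fin K → ℕ) → ℕ) (hℓ : Kraft N K D ℓ) :
    ((∑ i ∈ Icc 1 N, P i ^ (1 / (1 + ρ))) ^ (1 + ρ)) ^ K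
      ≤ ∑ x ∈ seqSet N K, prodP K P x * (D : ℝ) ^ (ρ * ℓ x) := by
  have hcampbell := sum_rpow_rpow_le_sum_mul_rpow_of_kraft (seqSet N K)
    (by positivity : (0 : ℝ) < D) hρ _ (fun x hx => prodP_nonneg hP hx) ℓ hℓ
  have hA : 0 ≤ ∑ i ∈ Icc 1 N, P i ^ (1 / (1 + ρ)) :=
    Finset.sum_nonneg fun i hi => by have := hP i hi; positivity
  rwa [Finset.sum_congr rfl fun x hx => prodP_rpow hP hx _, sum_prodP,
    ← Real.rpow_pow_comm hA] at hcampbell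

lemma logb_le_cgf {n k D : ℕ} (hk : 1 ≤ k) (hD : 2 ≤ D) (P : ℕ → ℝ)
    (ℓ : (Fin k → ℕ) → ℕ) (ρ : ℝ) {c : ℝ} (hc : 0 < c)
    (h : c ^ k ≤ ∑ x ∈ seqSet n k, prodP k P x * (D : ℝ) ^ (ρ * ℓ x)) :
    logb D c ≤ cgf n k D P ℓ ρ := by
  have hD1 : (1 : ℝ) < D := by exact_mod_cast hD
  have hk0 : (0 : ℝ) < k := by exact_mod_cast hk
  calc logb D c = 1 / (k : ℝ) * logb D (c ^ k) := by
        rw [Real.logb_pow]; field_simp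
    _ ≤ cgf n k D P ℓ ρ :=
        mul_le_mul_of_nonneg_left (Real.logb_le_logb_of_le hD1 (by positivity) h) (by positivity)

lemma cgf_le_add_logb {n k D : ℕ} (hk : 1 ≤ k) (hD : 2 ≤ D) (P : ℕ → ℝ)
    (ℓ : (Fin k → ℕ) → ℕ) (ρ : ℝ) {c : ℝ} (hc : 0 < c)
    (hpos : 0 < ∑ x ∈ seqSet n k, prodP k P x * (D : ℝ) ^ (ρ * ℓ x))
    (h : ∑ x ∈ seqSet n k, prodP k P x * (D : ℝ) ^ (ρ * ℓ x) ≤ (D : ℝ) ^ ρ * c ^ k) :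
    cgf n k D P ℓ ρ ≤ ρ / k + logb D c := by
  have hD1 : (1 : ℝ) < D := by exact_mod_cast hD
  have hk0 : (0 : ℝ) < k := by exact_mod_cast hk
  calc cgf n k D P ℓ ρ ≤ 1 / (k : ℝ) * logb D ((D : ℝ) ^ ρ * c ^ k) :=
        mul_le_mul_of_nonneg_left (Real.logb_le_logb_of_le hD1 hpos h) (by positivity)
    _ = ρ / k + logb D c := by
        rw [Real.logb_mul (by positivity) (by positivity), Real.logb_rpow (by positivity)
          hD1.ne', Real.logb_pow]
        field_simp

lemma logb_sum_rpow_rpow_eq_renyiH (n : ℕ) (D : ℝ) {ρ : ℝ} (hρ : 0 < ρ) (P : ℕ → ℝ)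
    (hA : 0 < ∑ i ∈ Icc 1 n, P i ^ (1 / (1 + ρ))) :
    logb D ((∑ i ∈ Icc 1 n, P i ^ (1 / (1 + ρ))) ^ (1 + ρ))
      = ρ / log D * renyiH n (1 / (1 + ρ)) P := by
  have hα : 1 / (1 + ρ) ≠ 1 := by
    rw [Ne, div_eq_one_iff_eq (by positivity)]; linarith
  rw [renyiH, if_neg hα, Real.logb, Real.log_rpow hA,
    show (1 - 1 / (1 + ρ))⁻¹ = (1 + ρ) / ρ by rw [one_sub_div (by positivity), inv_div]; ring]
  field_simp

lemma sum_mul_le_sum_mul_of_sum_range_le {m : ℕ} {b q c : ℕ → ℝ}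
    (hc : ∀ i, i + 1 < m → c i ≤ c (i + 1))
    (hpre : ∀ r ≤ m, ∑ i ∈ range r, q i ≤ ∑ i ∈ range r, b i)
    (htot : ∑ i ∈ range m, b i = ∑ i ∈ range m, q i) :
    ∑ i ∈ range m, b i * c i ≤ ∑ i ∈ range m, q i * c i := by
  have habel := Finset.sum_range_by_parts c (fun i => b i - q i) m
  simp only [smul_eq_mul, Finset.sum_sub_distrib, htot, sub_self, mul_zero, zero_sub] at habel
  have hterm : ∀ i ∈ range (m - 1),
      0 ≤ (c (i + 1) - c i) * (∑ j ∈ range (i + 1), b j - ∑ j ∈ range (i + 1), q j) := by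
    intro i hi
    rw [Finset.mem_range] at hi
    have := hpre (i + 1) (by omega)
    have := hc i (by omega)
    exact mul_nonneg (by linarith) (by linarith)
  have : ∑ i ∈ range m, c i * (b i - q i) ≤ 0 := by
    rw [habel, neg_nonpos]; exact Finset.sum_nonneg hterm
  simp only [mul_sub, Finset.sum_sub_distrib] at this
  simp only [mul_comm (b _), mul_comm (q _)]
  linarith

section Antitone

variable {m : ℕ} {b : ℕ → ℝ} (hb : ∀ i j, i ≤ j → j < m → b j ≤ b i)
include hb

lemma sum_le_sum_range_of_card_le (hb0 : ∀ i, 0 ≤ b i) {S : Finset ℕ} {r : ℕ}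
    (hS : S ⊆ range m) (hcard : S.card ≤ r) (hrm : r ≤ m) :
    ∑ i ∈ S, b i ≤ ∑ i ∈ range r, b i := by
  have hout : ∑ i ∈ S \ range r, b i ≤ (S \ range r).card • b (r - 1) :=
    Finset.sum_le_card_nsmul _ _ _ fun x hx => by
      simp only [Finset.mem_sdiff, Finset.mem_range] at hx
      exact hb _ _ (by omega) (Finset.mem_range.mp (hS hx.1))
  have hin : (range r \ S).card • b (r - 1) ≤ ∑ i ∈ range r \ S, b i :=
    Finset.card_nsmul_le_sum _ _ _ fun x hx => by
      simp only [Finset.mem_sdiff, Finset.mem_range] at hx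
      exact hb _ _ (by omega) (by omega)
  have hcard' : (S \ range r).card ≤ (range r \ S).card := by
    have h1 := Finset.card_inter_add_card_sdiff S (range r)
    have h2 := Finset.card_inter_add_card_sdiff (range r) S
    rw [Finset.inter_comm, Finset.card_range] at h2
    omega
  rw [← Finset.sum_inter_add_sum_sdiff S (range r), ← Finset.sum_inter_add_sum_sdiff (range r) S,
    Finset.inter_comm]
  linarith [nsmul_le_nsmul_left (hb0 (r - 1)) hcard']

lemma mul_sum_Ico_le_mul_sum_Ico {t r : ℕ} (htr : t ≤ r) (hrm : r ≤ m) :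
    ((m : ℝ) - t) * ∑ i ∈ Ico r m, b i ≤ ((m : ℝ) - r) * ∑ i ∈ Ico t m, b i := by
  have htail : ∑ i ∈ Ico r m, b i ≤ ((m : ℝ) - r) * b (r - 1) := by
    have := Finset.sum_le_card_nsmul (Ico r m) b (b (r - 1)) fun x hx => by
      rw [Finset.mem_Ico] at hx; exact hb _ _ (by omega) hx.2
    rwa [Nat.card_Ico, nsmul_eq_mul, Nat.cast_sub hrm] at this
  have hhead : ((r : ℝ) - t) * b (r - 1) ≤ ∑ i ∈ Ico t r, b i := by
    have := Finset.card_nsmul_le_sum (Ico t r) b (b (r - 1)) fun x hx => by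
      rw [Finset.mem_Ico] at hx; exact hb _ _ (by omega) (by omega)
    rwa [Nat.card_Ico, nsmul_eq_mul, Nat.cast_sub htr] at this
  have hmr : (0 : ℝ) ≤ m - r := sub_nonneg.2 (by exact_mod_cast hrm)
  have hrt : (0 : ℝ) ≤ r - t := sub_nonneg.2 (by exact_mod_cast htr)
  rw [← Finset.sum_Ico_consecutive b htr hrm]
  nlinarith [mul_le_mul_of_nonneg_left htail hrt, mul_le_mul_of_nonneg_left hhead hmr]

end Antitone

lemma exists_antitone_enumeration (m : ℕ) (p : ℕ → ℝ) :
    ∃ e e' : ℕ → ℕ, (∀ i ∈ range m, e i ∈ Icc 1 m ∧ e' (e i) = i) ∧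
      (∀ j ∈ Icc 1 m, e' j ∈ range m ∧ e (e' j) = j) ∧
      ∀ i j, i ≤ j → j < m → p (e j) ≤ p (e i) := by
  set σ := Tuple.sort fun i : Fin m => -p (i + 1)
  have hσ := Tuple.monotone_sort fun i : Fin m => -p (i + 1)
  refine ⟨fun i => if h : i < m then σ ⟨i, h⟩ + 1 else 0,
    fun j => if h : j - 1 < m then σ.symm ⟨j - 1, h⟩ else 0, ?_, ?_, ?_⟩
  · intro i hi
    rw [Finset.mem_range] at hi
    simp [hi]
  · intro j hj
    rw [Finset.mem_Icc] at hj
    have : j - 1 < m := by omega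
    simp only [this, ↓reduceDIte, mem_range, Fin.is_lt, Fin.eta, Equiv.apply_symm_apply, true_and]
    omega
  · intro i j hij hj
    have := hσ (a := ⟨i, by omega⟩) (b := ⟨j, hj⟩) hij
    simp only [Function.comp_apply, neg_le_neg_iff] at this
    simpa [hj, show i < m by omega] using this

/-- The common mass of the cells `t + 1, …, m` of `X̃_m`. -/
noncomputable def waterLevel (n m t : ℕ) (P : ℕ → ℝ) : ℝ :=
  ((m : ℝ) - t)⁻¹ * ∑ j ∈ Icc (t + 1) n, P j

noncomputable def waterFill (n m t : ℕ) (P : ℕ → ℝ) (i : ℕ) : ℝ :=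
  if i ≤ t then P i else waterLevel n m t P

/-- In the uniform case of `tildeX` one may take `t = 0`, so both cases are water-fillings. -/
lemma exists_tildeX_eq_waterFill {n m : ℕ} (hm : 2 ≤ m) {P : ℕ → ℝ} (hP : IsPMF n P) :
    ∃ t < m, (1 ≤ t → waterLevel n m t P ≤ P t) ∧
      ∀ i, 1 ≤ i → tildeX n m P i = waterFill n m t P i := by
  by_cases hc : P 1 < 1 / (m : ℝ)
  · refine ⟨0, by omega, by omega, fun i hi => ?_⟩
    simp only [tildeX, if_pos hc, waterFill, waterLevel, hP.2]
    simp [show ¬ i = 0 by omega]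
  · set S := {i : ℕ | 1 ≤ i ∧ i ≤ m - 1 ∧
      ((m : ℝ) - (i : ℝ))⁻¹ * ∑ j ∈ Icc (i + 1) n, P j ≤ P i}
    have hn : 1 ≤ n := by
      by_contra h
      have := hP.2
      simp [show n = 0 by omega] at this
    have hm1 : (1 : ℝ) < m := by exact_mod_cast hm
    have h1S : 1 ∈ S := by
      refine ⟨le_rfl, by omega, ?_⟩
      have hsplit := Finset.add_sum_Ioc_eq_sum_Icc (f := P) hn
      rw [hP.2, ← Finset.Icc_add_one_left_eq_Ioc] at hsplit
      rw [Nat.cast_one, inv_mul_le_iff₀ (by linarith)]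
      rw [not_lt, div_le_iff₀ (by linarith)] at hc
      linarith
    have htS : nStar n m P ∈ S := Nat.sSup_mem ⟨1, h1S⟩ ⟨m - 1, fun i hi => hi.2.1⟩
    refine ⟨nStar n m P, by have := htS.2.1; omega, fun _ => htS.2.2, fun i _ => ?_⟩
    simp only [tildeX, if_neg hc, waterFill, waterLevel]

lemma sum_range_waterFill_of_le {n m t : ℕ} {P : ℕ → ℝ} {r : ℕ} (hrt : r ≤ t) :
    ∑ i ∈ range r, waterFill n m t P (i + 1) = ∑ j ∈ Icc 1 r, P j := by
  rw [sum_Icc_one_eq_sum_range]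
  exact Finset.sum_congr rfl fun i hi => by
    simp only [Finset.mem_range] at hi; simp only [waterFill, if_pos (by omega : i + 1 ≤ t)]

lemma waterFill_antitone {n m t : ℕ} {P : ℕ → ℝ} (hdec : DecOn n P)
    (hlevel : 1 ≤ t → waterLevel n m t P ≤ P t)
    {i j : ℕ} (hi : 1 ≤ i) (hij : i ≤ j) (hjn : j ≤ n) :
    waterFill n m t P j ≤ waterFill n m t P i := by
  have hPanti : ∀ {k}, i ≤ k → k ≤ n → P k ≤ P i := fun hik hkn =>
    hdec i (by simp only [Finset.mem_Icc]; omega) _ (by simp only [Finset.mem_Icc]; omega) hik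
  unfold waterFill
  by_cases hjt : j ≤ t
  · rw [if_pos hjt, if_pos (hij.trans hjt)]; exact hPanti hij hjn
  rw [if_neg hjt]
  by_cases hit : i ≤ t
  · rw [if_pos hit]; exact (hlevel (by omega)).trans (hPanti hit (by omega))
  · rw [if_neg hit]

section WaterFill

variable {n m t : ℕ} {P : ℕ → ℝ} (hP : IsPMF n P) (htm : t < m) (hmn : m ≤ n)
include hP htm hmn

lemma waterLevel_pos : 0 < waterLevel n m t P := by
  have hmt : (0 : ℝ) < m - t := sub_pos.2 (by exact_mod_cast htm)
  have hsum : 0 < ∑ j ∈ Icc (t + 1) n, P j :=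
    Finset.sum_pos (fun j hj => hP.1 j (by simp only [Finset.mem_Icc] at hj ⊢; omega))
      (Finset.nonempty_Icc.2 (by omega))
  unfold waterLevel
  positivity

lemma waterFill_pos {i : ℕ} (hi : i ∈ Icc 1 m) : 0 < waterFill n m t P i := by
  unfold waterFill
  split_ifs with h
  · exact hP.1 i (by simp only [Finset.mem_Icc] at hi ⊢; omega)
  · exact waterLevel_pos hP htm hmn

lemma sum_range_waterFill_of_ge {r : ℕ} (htr : t ≤ r) :
    ∑ i ∈ range r, waterFill n m t P (i + 1) = 1 - ((m : ℝ) - r) * waterLevel n m t P := by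
  have hmt : (m : ℝ) - t ≠ 0 := sub_ne_zero.2 (by exact_mod_cast htm.ne')
  have htail : ∑ i ∈ Ico t r, waterFill n m t P (i + 1) = ((r : ℝ) - t) * waterLevel n m t P := by
    have hlevel : ∀ i ∈ Ico t r, waterFill n m t P (i + 1) = waterLevel n m t P := fun i hi => by
      simp only [Finset.mem_Ico] at hi; simp only [waterFill, if_neg (by omega : ¬ i + 1 ≤ t)]
    rw [Finset.sum_congr rfl hlevel, Finset.sum_const, Nat.card_Ico, nsmul_eq_mul,
      Nat.cast_sub htr]
  have htotal : ∑ j ∈ Icc 1 t, P j + ((m : ℝ) - t) * waterLevel n m t P = 1 := by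
    rw [waterLevel, mul_inv_cancel_left₀ hmt, sum_Icc_one_add_sum_Icc (by omega), hP.2]
  rw [← Finset.sum_range_add_sum_Ico _ htr, htail, sum_range_waterFill_of_le le_rfl]
  linarith

lemma sum_waterFill : ∑ j ∈ Icc 1 m, waterFill n m t P j = 1 := by
  rw [sum_Icc_one_eq_sum_range, sum_range_waterFill_of_ge hP htm hmn htm.le, sub_self, zero_mul,
    sub_zero]

/-- For `r ≤ t` this is `hPb`. For `r ≥ t` compare tails: that of `X̃_m` from `r` is `m - r`
times the level, while the average of the tail of the nonincreasing `b` decreases in `r` and is at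
most the level at `r = t`, by `hPb`. -/
lemma sum_range_waterFill_le {b : ℕ → ℝ} (hb : ∀ i j, i ≤ j → j < m → b j ≤ b i)
    (hbsum : ∑ i ∈ range m, b i = 1) (hPb : ∀ r ≤ m, ∑ j ∈ Icc 1 r, P j ≤ ∑ i ∈ range r, b i)
    {r : ℕ} (hrm : r ≤ m) :
    ∑ i ∈ range r, waterFill n m t P (i + 1) ≤ ∑ i ∈ range r, b i := by
  rcases le_total r t with hrt | htr
  · rw [sum_range_waterFill_of_le hrt]; exact hPb r hrm
  have hmt : (0 : ℝ) < m - t := sub_pos.2 (by exact_mod_cast htm)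
  have htail : ∀ s ≤ m, ∑ i ∈ Ico s m, b i = 1 - ∑ i ∈ range s, b i := fun s hs => by
    rw [← hbsum, ← Finset.sum_range_add_sum_Ico b hs]; ring
  have hlevel : ∑ i ∈ Ico t m, b i ≤ ((m : ℝ) - t) * waterLevel n m t P := by
    have h1 := sum_range_waterFill_of_ge hP htm hmn le_rfl
    rw [sum_range_waterFill_of_le le_rfl] at h1
    linarith [htail t htm.le, hPb t htm.le]
  have hmr : (0 : ℝ) ≤ m - r := sub_nonneg.2 (by exact_mod_cast hrm)
  have hmono : ((m : ℝ) - t) * ∑ i ∈ Ico r m, b i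
      ≤ ((m : ℝ) - t) * ((m - r) * waterLevel n m t P) :=
    (mul_sum_Ico_le_mul_sum_Ico hb htr hrm).trans <| by
      rw [mul_left_comm]; exact mul_le_mul_of_nonneg_left hlevel hmr
  rw [sum_range_waterFill_of_ge hP htm hmn htr]
  linarith [le_of_mul_le_mul_left hmono hmt, htail r hrm]

end WaterFill

section Enumeration

variable {m : ℕ} {e e' : ℕ → ℕ} (he : ∀ i ∈ range m, e i ∈ Icc 1 m ∧ e' (e i) = i)
  (he' : ∀ j ∈ Icc 1 m, e' j ∈ range m ∧ e (e' j) = j)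
include he he'

lemma sum_Icc_eq_sum_range_comp (F : ℕ → ℝ) :
    ∑ j ∈ Icc 1 m, F j = ∑ i ∈ range m, F (e i) :=
  (Finset.sum_nbij' e e' (fun i hi => (he i hi).1) (fun j hj => (he' j hj).1)
    (fun i hi => (he i hi).2) (fun j hj => (he' j hj).2) fun _ _ => rfl).symm

omit he in
lemma sum_le_sum_range_comp_of_card_le {p : ℕ → ℝ} (hp : ∀ j, 0 ≤ p j)
    (hpe : ∀ i j, i ≤ j → j < m → p (e j) ≤ p (e i)) {J : Finset ℕ} (hJ : J ⊆ Icc 1 m)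
    {r : ℕ} (hJr : J.card ≤ r) (hrm : r ≤ m) :
    ∑ j ∈ J, p j ≤ ∑ i ∈ range r, p (e i) := by
  have hinj : Set.InjOn e' J := fun x hx y hy hxy => by
    rw [← (he' x (hJ hx)).2, ← (he' y (hJ hy)).2, hxy]
  calc ∑ j ∈ J, p j = ∑ i ∈ J.image e', p (e i) := by
        rw [Finset.sum_image hinj]
        exact Finset.sum_congr rfl fun j hj => by rw [(he' j (hJ hj)).2]
    _ ≤ ∑ i ∈ range r, p (e i) :=
        sum_le_sum_range_of_card_le hpe (fun i => hp _)
          (fun i hi => by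
            obtain ⟨j, hj, rfl⟩ := Finset.mem_image.mp hi
            exact (he' j (hJ hj)).1)
          (Finset.card_image_le.trans hJr) hrm

/-- `Q` is the tilt `q ^ α / ∑ q ^ α`, `α = 1 / (1 + ρ)`, transported along the ranking of `p`;
with it `∑ p Q ^ (-ρ)` is `(∑ q ^ α) ^ ρ` times `∑ p q ^ (α - 1)` over ranks, and Abel summation
against the nondecreasing `q ^ (α - 1)` compares this with `∑ q ^ α`. -/
lemma exists_pmf_sum_mul_rpow_neg_le (hm : 1 ≤ m) {p q : ℕ → ℝ} (hq : ∀ i ∈ Icc 1 m, 0 < q i)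
    (hq_anti : ∀ i j, 1 ≤ i → i ≤ j → j ≤ m → q j ≤ q i)
    (hpre : ∀ r ≤ m, ∑ i ∈ range r, q (i + 1) ≤ ∑ i ∈ range r, p (e i))
    (htot : ∑ i ∈ range m, p (e i) = ∑ i ∈ range m, q (i + 1)) {ρ : ℝ} (hρ : 0 < ρ) :
    ∃ Q : ℕ → ℝ, (∀ j ∈ Icc 1 m, 0 < Q j) ∧ ∑ j ∈ Icc 1 m, Q j = 1 ∧
      ∑ j ∈ Icc 1 m, p j * Q j ^ (-ρ) ≤ (∑ j ∈ Icc 1 m, q j ^ (1 / (1 + ρ))) ^ (1 + ρ) := by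
  set α := 1 / (1 + ρ) with hα
  set W := ∑ j ∈ Icc 1 m, q j ^ α
  have hq' : ∀ i ∈ range m, 0 < q (i + 1) := fun i hi =>
    hq _ (by simp only [Finset.mem_range, Finset.mem_Icc] at hi ⊢; omega)
  have hW : 0 < W :=
    Finset.sum_pos (fun j hj => Real.rpow_pos_of_pos (hq j hj) _) (Finset.nonempty_Icc.2 hm)
  have hWrange : ∑ i ∈ range m, q (i + 1) ^ α = W :=
    (sum_Icc_one_eq_sum_range m fun j => q j ^ α).symm
  have htilt : ∀ i ∈ range m, (q (i + 1) ^ α / W) ^ (-ρ) = W ^ ρ * q (i + 1) ^ (α - 1) :=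
    fun i hi => by
      rw [Real.div_rpow (by have := hq' i hi; positivity) hW.le, ← Real.rpow_mul (hq' i hi).le,
        Real.rpow_neg hW.le, div_inv_eq_mul, mul_comm,
        show α * -ρ = α - 1 by rw [hα]; field_simp; ring]
  have habel := sum_mul_le_sum_mul_of_sum_range_le (c := fun i => q (i + 1) ^ (α - 1))
    (fun i hi => Real.rpow_le_rpow_of_nonpos (hq' _ (Finset.mem_range.2 (by omega)))
      (hq_anti _ _ (by omega) (by omega) (by omega))
      (by rw [hα, sub_nonpos, div_le_one (by positivity)]; linarith)) hpre htot
  refine ⟨fun j => q (e' j + 1) ^ α / W, fun j hj => ?_, ?_, ?_⟩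
  · have := hq' _ (he' j hj).1; positivity
  · rw [sum_Icc_eq_sum_range_comp he he', ← Finset.sum_div, div_eq_one_iff_eq hW.ne', ← hWrange]
    exact Finset.sum_congr rfl fun i hi => by rw [(he i hi).2]
  · rw [sum_Icc_eq_sum_range_comp he he']
    calc ∑ i ∈ range m, p (e i) * (q (e' (e i) + 1) ^ α / W) ^ (-ρ)
        = W ^ ρ * ∑ i ∈ range m, p (e i) * q (i + 1) ^ (α - 1) := by
          rw [Finset.mul_sum]
          exact Finset.sum_congr rfl fun i hi => by rw [(he i hi).2, htilt i hi]; ring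
      _ ≤ W ^ ρ * ∑ i ∈ range m, q (i + 1) * q (i + 1) ^ (α - 1) :=
          mul_le_mul_of_nonneg_left habel (by positivity)
      _ = W ^ (1 + ρ) := by
          rw [Finset.sum_congr rfl fun i hi => by
            rw [← Real.rpow_one_add' (hq' i hi).le (by rw [add_sub_cancel]; positivity),
              add_sub_cancel], hWrange, Real.rpow_add hW, Real.rpow_one, mul_comm]

end Enumeration

section Push

variable {n m : ℕ} {P : ℕ → ℝ} (hP : IsPMF n P) {f : ℕ → ℕ}
include hP

lemma push_nonneg (j : ℕ) : 0 ≤ push n f P j :=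
  Finset.sum_nonneg fun i hi => (hP.1 i (Finset.mem_filter.mp hi).1).le

omit hP in
lemma sum_push (hf : ∀ i ∈ Icc 1 n, f i ∈ Icc 1 m) :
    ∑ j ∈ Icc 1 m, push n f P j = ∑ i ∈ Icc 1 n, P i :=
  Finset.sum_fiberwise_of_maps_to hf P

lemma sum_Icc_le_sum_image_push {r : ℕ} (hrn : r ≤ n) :
    ∑ i ∈ Icc 1 r, P i ≤ ∑ j ∈ (Icc 1 r).image f, push n f P j := by
  simp only [push]
  rw [Finset.sum_fiberwise_eq_sum_filter]
  refine Finset.sum_le_sum_of_subset_of_nonneg (fun i hi => ?_) fun i hi _ =>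
    (hP.1 i (Finset.mem_filter.mp hi).1).le
  simp only [Finset.mem_Icc] at hi
  exact Finset.mem_filter.mpr ⟨by simp only [Finset.mem_Icc]; omega,
    Finset.mem_image_of_mem f (by simpa using hi)⟩

end Push

lemma tildeX_pos {n m : ℕ} (hm : 2 ≤ m) (hmn : m ≤ n) {P : ℕ → ℝ} (hP : IsPMF n P) {i : ℕ}
    (hi : i ∈ Icc 1 m) : 0 < tildeX n m P i := by
  obtain ⟨t, htm, -, htX⟩ := exists_tildeX_eq_waterFill hm hP
  rw [htX i (Finset.mem_Icc.mp hi).1]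
  exact waterFill_pos hP htm hmn hi

lemma exists_pmf_sum_push_mul_rpow_neg_le {n m : ℕ} (hm : 2 ≤ m) (hmn : m ≤ n) {P : ℕ → ℝ}
    (hP : IsPMF n P) (hdec : DecOn n P) {f : ℕ → ℕ} (hf : ∀ i ∈ Icc 1 n, f i ∈ Icc 1 m)
    {ρ : ℝ} (hρ : 0 < ρ) :
    ∃ Q : ℕ → ℝ, (∀ j ∈ Icc 1 m, 0 < Q j) ∧ ∑ j ∈ Icc 1 m, Q j = 1 ∧
      ∑ j ∈ Icc 1 m, push n f P j * Q j ^ (-ρ)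
        ≤ (∑ j ∈ Icc 1 m, tildeX n m P j ^ (1 / (1 + ρ))) ^ (1 + ρ) := by
  obtain ⟨t, htm, hlevel, htX⟩ := exists_tildeX_eq_waterFill hm hP
  obtain ⟨e, e', he, he', hsorted⟩ := exists_antitone_enumeration m (push n f P)
  have hbsum : ∑ i ∈ range m, push n f P (e i) = 1 := by
    rw [← sum_Icc_eq_sum_range_comp he he', sum_push hf, hP.2]
  -- `f` maps `{1, …, r}` onto at most `r` points, which carry at least `P 1 + ⋯ + P r`.
  have hPb : ∀ r ≤ m, ∑ j ∈ Icc 1 r, P j ≤ ∑ i ∈ range r, push n f P (e i) := fun r hrm =>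
    (sum_Icc_le_sum_image_push hP (by omega)).trans <|
      sum_le_sum_range_comp_of_card_le he' (push_nonneg hP) hsorted
        (fun j hj => by
          obtain ⟨i, hi, rfl⟩ := Finset.mem_image.mp hj
          exact hf i (by simp only [Finset.mem_Icc] at hi ⊢; omega))
        (Finset.card_image_le.trans (by simp)) hrm
  rw [Finset.sum_congr rfl fun j hj => by rw [htX j (Finset.mem_Icc.mp hj).1]]
  exact exists_pmf_sum_mul_rpow_neg_le he he' (by omega)
    (fun i hi => waterFill_pos hP htm hmn hi)
    (fun i j hi hij hj => waterFill_antitone hdec hlevel hi hij (by omega))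
    (fun r hr => sum_range_waterFill_le hP htm hmn hsorted hbsum hPb hr)
    (by rw [hbsum, ← sum_Icc_one_eq_sum_range, sum_waterFill hP htm hmn]) hρ

theorem stmt19 (n m k D : ℕ) (hm : 2 ≤ m) (hmn : m < n) (hk : 1 ≤ k) (hD : 2 ≤ D)
    (P : ℕ → ℝ) (hP : IsPMF n P) (hdec : DecOn n P)
    (f : ℕ → ℕ) (hf : ∀ i ∈ Finset.Icc 1 n, f i ∈ Finset.Icc 1 m) :
    ∀ ρ : ℝ, 0 < ρ →
      ∃ ℓbar : (Fin k → ℕ) → ℕ, Kraft m k D ℓbar ∧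
        ∀ ℓ : (Fin k → ℕ) → ℕ, Kraft n k D ℓ →
          (ρ / Real.log D) *
              (renyiH n (1 / (1 + ρ)) P - renyiH m (1 / (1 + ρ)) (tildeX n m P)) - ρ / (k : ℝ)
            ≤ cgf n k D P ℓ ρ - cgf m k D (push n f P) ℓbar ρ := by
  intro ρ hρ
  obtain ⟨Q, hQ, hQsum, hkey⟩ := exists_pmf_sum_push_mul_rpow_neg_le hm hmn.le hP hdec hf hρ
  obtain ⟨ℓbar, hkraft, hach⟩ :=
    exists_kraft_sum_le m k D hD hρ.le (push n f P) Q (fun j _ => push_nonneg hP j) hQ hQsum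
  refine ⟨ℓbar, hkraft, fun ℓ hℓ => ?_⟩
  have hA : 0 < ∑ i ∈ Icc 1 n, P i ^ (1 / (1 + ρ)) :=
    Finset.sum_pos (fun i hi => Real.rpow_pos_of_pos (hP.1 i hi) _)
      (Finset.nonempty_Icc.2 (by omega))
  have hW : 0 < ∑ j ∈ Icc 1 m, tildeX n m P j ^ (1 / (1 + ρ)) :=
    Finset.sum_pos (fun j hj => Real.rpow_pos_of_pos (tildeX_pos hm hmn.le hP hj) _)
      (Finset.nonempty_Icc.2 (by omega))
  have hlower := logb_le_cgf hk hD P ℓ ρ (by positivity)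
    (pow_rpow_le_sum_prodP_mul_rpow_of_kraft n k D hD hρ P (fun i hi => (hP.1 i hi).le) ℓ hℓ)
  have hmoment : ∑ y ∈ seqSet m k, prodP k (push n f P) y * (D : ℝ) ^ (ρ * ℓbar y)
      ≤ (D : ℝ) ^ ρ * ((∑ j ∈ Icc 1 m, tildeX n m P j ^ (1 / (1 + ρ))) ^ (1 + ρ)) ^ k := by
    refine hach.trans ?_
    gcongr
    exact Finset.sum_nonneg fun j hj =>
      mul_nonneg (push_nonneg hP j) (by have := hQ j hj; positivity)
  have hupper := cgf_le_add_logb hk hD (push n f P) ℓbar ρ (by positivity)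
    (one_pos.trans_le (one_le_sum_prodP_mul_rpow (by exact_mod_cast (by omega : 1 ≤ D))
      (fun j _ => push_nonneg hP j) (by rw [sum_push hf, hP.2]) ℓbar hρ.le)) hmoment
  rw [logb_sum_rpow_rpow_eq_renyiH n D hρ P hA] at hlower
  rw [logb_sum_rpow_rpow_eq_renyiH m D hρ _ hW] at hupper
  rw [mul_sub]
  linarith
end
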